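/- arXiv:math/0702887 — 12 statements merged into one kernel-verified Lean document; each statement's English description precedes it below -/
import Mathlib

section
/- Let k ≥ 2 and let I and J be stable decompositions of {0,1,…,k} such that I ≠ J and J is a refinement of I. Then there exist pairwise distinct elements i, j, m of {1,…,k} such that the triple {i,j,m} has type I with respect to J and type II with respect to I. -/
/-- A stable decomposition of `{0,1,…,k}`: a partition (encoded as a setoid on
`Fin (k+1)`) whose block containing `0` is `{0}` and which has at least three blocks. -/
structure StableDecomp (k : ℕ) where
  rel : Setoid (Fin (k + 1))
  zero_block : ∀ x : Fin (k + 1), rel.r x 0 ↔ x = 0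
  three_blocks : 3 ≤ Nat.card (Quotient rel)

/-- A triple has type I with respect to a decomposition if its elements are pairwise
non-equivalent. -/
def TypeOne {k : ℕ} (I : StableDecomp k) (i j m : Fin (k + 1)) : Prop :=
  ¬ I.rel.r i j ∧ ¬ I.rel.r j m ∧ ¬ I.rel.r i m

/-- A triple has type II with respect to a decomposition if exactly two of its elements
are equivalent. -/
def TypeTwo {k : ℕ} (I : StableDecomp k) (i j m : Fin (k + 1)) : Prop :=
  (I.rel.r i j ∧ ¬ I.rel.r j m ∧ ¬ I.rel.r i m) ∨
  (I.rel.r j m ∧ ¬ I.rel.r i j ∧ ¬ I.rel.r i m) ∨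
  (I.rel.r i m ∧ ¬ I.rel.r i j ∧ ¬ I.rel.r j m)

/-- `J` refines `I`: every block of `J` is contained in some block of `I`,
i.e. `J`-equivalence implies `I`-equivalence. -/
def Refines {k : ℕ} (J I : StableDecomp k) : Prop :=
  ∀ i j : Fin (k + 1), J.rel.r i j → I.rel.r i j

lemma exists_third {α : Type*} [Finite α] (h : 3 ≤ Nat.card α) (a b : α) :
    ∃ c, c ≠ a ∧ c ≠ b := by
  classical
  by_contra hc
  push_neg at hc
  haveI := Fintype.ofFinite α
  have hsub : (Finset.univ : Finset α) ⊆ {a, b} := by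
    intro c _
    rcases eq_or_ne c a with h1 | h1
    · simp [h1]
    · simp [hc c h1]
  have := Finset.card_le_card hsub
  have hcard : Nat.card α = Fintype.card α := Nat.card_eq_fintype_card
  have h2 : ({a, b} : Finset α).card ≤ 2 := Finset.card_insert_le a {b} |>.trans (by simp)
  simp [Finset.card_univ] at this
  omega

theorem stmt0 (k : ℕ) (hk : 2 ≤ k) (I J : StableDecomp k)
    (hne : I.rel ≠ J.rel) (href : Refines J I) :
    ∃ i j m : Fin (k + 1), i ≠ 0 ∧ j ≠ 0 ∧ m ≠ 0 ∧
      i ≠ j ∧ j ≠ m ∧ i ≠ m ∧ TypeOne J i j m ∧ TypeTwo I i j m := by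
  -- find i j with I-equiv but not J-equiv
  have hex : ∃ i j : Fin (k + 1), I.rel.r i j ∧ ¬ J.rel.r i j := by
    by_contra h
    push_neg at h
    apply hne
    apply Setoid.ext
    intro x y
    exact ⟨h x y, href x y⟩
  obtain ⟨i, j, hIij, hJij⟩ := hex
  have hij : i ≠ j := by rintro rfl; exact hJij (J.rel.refl i)
  have hi0 : i ≠ 0 := by
    rintro rfl
    have := (I.zero_block j).mp (I.rel.symm hIij)
    exact hij this.symm
  have hj0 : j ≠ 0 := by
    rintro rfl
    exact hij ((I.zero_block i).mp hIij)
  -- find a third I-class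
  obtain ⟨c, hc0, hci⟩ := exists_third I.three_blocks
    (Quotient.mk I.rel (0 : Fin (k+1))) (Quotient.mk I.rel i)
  obtain ⟨m, rfl⟩ := Quotient.exists_rep c
  have hIm0 : ¬ I.rel.r m 0 := fun h => hc0 (Quotient.sound h)
  have hImi : ¬ I.rel.r m i := fun h => hci (Quotient.sound h)
  have hm0 : m ≠ 0 := fun h => hIm0 (h ▸ I.rel.refl m)
  have hIim : ¬ I.rel.r i m := fun h => hImi (I.rel.symm h)
  have hIjm : ¬ I.rel.r j m := fun h => hIim (I.rel.trans hIij h)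
  have him : i ≠ m := fun h => hIim (h ▸ I.rel.refl i)
  have hjm : j ≠ m := fun h => hIjm (h ▸ I.rel.refl j)
  refine ⟨i, j, m, hi0, hj0, hm0, hij, hjm, him, ?_, ?_⟩
  · exact ⟨hJij, fun h => hIjm (href _ _ h), fun h => hIim (href _ _ h)⟩
  · exact Or.inl ⟨hIij, hIjm, hIim⟩
end

section
/- Let k ≥ 2 and let I and J be stable decompositions of {0,1,…,k} such that I ≠ J, J is not a refinement of I, and I has at least 4 blocks. Then there exist pairwise distinct elements i, j, m of {1,…,k} such that the triple {i,j,m} has type I with respect to I and type II with respect to J. -/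
lemma aux_three {n : ℕ} (r : Setoid (Fin n)) (h : 3 ≤ Nat.card (Quotient r))
    (a b : Fin n) : ∃ z, ¬ r.r z a ∧ ¬ r.r z b := by
  by_contra hc
  push_neg at hc
  have hs : Function.Surjective
      (fun x : Bool => if x then Quotient.mk r a else Quotient.mk r b) := by
    intro q
    induction q using Quotient.ind with
    | _ z =>
      by_cases hz : r.r z a
      · exact ⟨true, by simpa using (Quotient.sound hz).symm⟩
      · exact ⟨false, by simpa using (Quotient.sound (hc z hz)).symm⟩
  have := Nat.card_le_card_of_surjective _ hs
  simp [Nat.card_eq_fintype_card] at this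
  omega

lemma aux_four {n : ℕ} (r : Setoid (Fin n)) (h : 4 ≤ Nat.card (Quotient r))
    (a b c : Fin n) : ∃ z, ¬ r.r z a ∧ ¬ r.r z b ∧ ¬ r.r z c := by
  by_contra hc
  push_neg at hc
  have hs : Function.Surjective
      (fun x : Fin 3 => if x = 0 then Quotient.mk r a else
        if x = 1 then Quotient.mk r b else Quotient.mk r c) := by
    intro q
    induction q using Quotient.ind with
    | _ z =>
      by_cases hz : r.r z a
      · exact ⟨0, by simpa using (Quotient.sound hz).symm⟩
      · by_cases hz2 : r.r z b
        · exact ⟨1, by simpa using (Quotient.sound hz2).symm⟩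
        · exact ⟨2, by simpa using (Quotient.sound (hc z hz hz2)).symm⟩
  have := Nat.card_le_card_of_surjective _ hs
  simp [Nat.card_eq_fintype_card] at this
  omega

theorem stmt1 (k : ℕ) (hk : 2 ≤ k) (I J : StableDecomp k)
    (hne : I.rel ≠ J.rel) (hnref : ¬ Refines J I)
    (hI4 : 4 ≤ Nat.card (Quotient I.rel)) :
    ∃ i j m : Fin (k + 1), i ≠ 0 ∧ j ≠ 0 ∧ m ≠ 0 ∧
      i ≠ j ∧ j ≠ m ∧ i ≠ m ∧ TypeOne I i j m ∧ TypeTwo J i j m := by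
  -- notation
  have Irefl := I.rel.refl'
  have Isymm : ∀ {x y : Fin (k+1)}, I.rel.r x y → I.rel.r y x := fun h => I.rel.symm' h
  have Itrans : ∀ {x y z : Fin (k+1)}, I.rel.r x y → I.rel.r y z → I.rel.r x z :=
    fun h h' => I.rel.trans' h h'
  have Jsymm : ∀ {x y : Fin (k+1)}, J.rel.r x y → J.rel.r y x := fun h => J.rel.symm' h
  have Jtrans : ∀ {x y z : Fin (k+1)}, J.rel.r x y → J.rel.r y z → J.rel.r x z :=
    fun h h' => J.rel.trans' h h'
  have ne_of_nI : ∀ {x y : Fin (k+1)}, ¬ I.rel.r x y → x ≠ y := by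
    rintro x y h rfl; exact h (Irefl x)
  have ne_of_nJ : ∀ {x y : Fin (k+1)}, ¬ J.rel.r x y → x ≠ y := by
    rintro x y h rfl; exact h (J.rel.refl' x)
  -- get a pair related by J but not by I
  obtain ⟨a, b, hJab, hIab⟩ : ∃ a b, J.rel.r a b ∧ ¬ I.rel.r a b := by
    by_contra hc
    push_neg at hc
    exact hnref (fun i j h => hc i j h)
  have ha0 : a ≠ 0 := by
    rintro rfl
    have hb0 : b = 0 := (J.zero_block b).1 (Jsymm hJab)
    exact hIab (hb0 ▸ Irefl 0)
  have hb0 : b ≠ 0 := by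
    rintro rfl
    have : a = 0 := (J.zero_block a).1 hJab
    exact hIab (this ▸ Irefl a)
  -- w in a fourth I-block
  obtain ⟨w, hw0, hwa, hwb⟩ := aux_four I.rel hI4 0 a b
  have hw0' : w ≠ 0 := fun h => hw0 (h ▸ Irefl 0)
  by_cases hw : J.rel.r a w
  · -- a, b, w all J-equivalent; use a third J-block element c
    obtain ⟨c, hc0, hca⟩ := aux_three J.rel J.three_blocks 0 a
    have hc0' : c ≠ 0 := fun h => hc0 (h ▸ J.rel.refl' 0)
    have hcb : ¬ J.rel.r c b := fun h => hca (Jtrans h (Jsymm hJab))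
    by_cases hIca : I.rel.r c a
    · -- c in a's I-block: use (c, b, w)
      have hIcb : ¬ I.rel.r c b := fun h => hIab (Itrans (Isymm hIca) h)
      have hIcw : ¬ I.rel.r c w := fun h => hwa (Itrans (Isymm h) hIca)
      have hJbw : J.rel.r b w := Jtrans (Jsymm hJab) hw
      have hJcw : ¬ J.rel.r c w := fun h => hca (Jtrans h (Jsymm hw))
      exact ⟨c, b, w, hc0', hb0, hw0', ne_of_nI hIcb,
        ne_of_nI (fun h => hwb (Isymm h)), ne_of_nI hIcw,
        ⟨hIcb, fun h => hwb (Isymm h), hIcw⟩,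
        Or.inr (Or.inl ⟨hJbw, hcb, hJcw⟩)⟩
    · by_cases hIcb : I.rel.r c b
      · -- c in b's I-block: use (c, a, w)
        have hIcw : ¬ I.rel.r c w := fun h => hwb (Itrans (Isymm h) hIcb)
        have hJcw : ¬ J.rel.r c w := fun h => hca (Jtrans h (Jsymm hw))
        exact ⟨c, a, w, hc0', ha0, hw0', ne_of_nI hIca,
          ne_of_nI (fun h => hwa (Isymm h)), ne_of_nI hIcw,
          ⟨hIca, fun h => hwa (Isymm h), hIcw⟩,
          Or.inr (Or.inl ⟨hw, hca, hJcw⟩)⟩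
      · -- c in a fresh I-block: use (a, b, c)
        have hIbc : ¬ I.rel.r b c := fun h => hIcb (Isymm h)
        have hIac : ¬ I.rel.r a c := fun h => hIca (Isymm h)
        exact ⟨a, b, c, ha0, hb0, hc0', ne_of_nI hIab, ne_of_nI hIbc,
          ne_of_nI hIac, ⟨hIab, hIbc, hIac⟩,
          Or.inl ⟨hJab, fun h => hcb (Jsymm h), fun h => hca (Jsymm h)⟩⟩
  · -- ¬ J a w : use (a, b, w)
    have hJbw : ¬ J.rel.r b w := fun h => hw (Jtrans hJab h)
    have hIbw : ¬ I.rel.r b w := fun h => hwb (Isymm h)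
    have hIaw : ¬ I.rel.r a w := fun h => hwa (Isymm h)
    exact ⟨a, b, w, ha0, hb0, hw0', ne_of_nI hIab, ne_of_nI hIbw,
      ne_of_nI hIaw, ⟨hIab, hIbw, hIaw⟩, Or.inl ⟨hJab, hJbw, hw⟩⟩
end

section
/- Let G be a finite tree (a finite connected acyclic simple graph) with vertex set T, let r ∈ T be a fixed vertex, and let V be a real vector space. Then for every vector v₁ ∈ V and every family (v_{αβ}) of vectors of V indexed by the ordered pairs (α,β) of adjacent vertices, there exist a family (ξ_α)_{α∈T} in V and a family (η_{αβ}) in V indexed by ordered pairs of adjacent vertices such that η_{αβ} = η_{βα} for every adjacent pair, ξ_α + η_{αβ} = v_{αβ} for every ordered adjacent pair (α,β), and ξ_r = v₁. -/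
/-!
Put `d α β := v_{βα} - v_{αβ}`, an antisymmetric function on ordered adjacent pairs. The required
`η_{αβ} = v_{αβ} - ξ_α` is symmetric exactly when `ξ_β - ξ_α = d α β`, so it suffices that every
antisymmetric edge function on a tree is the coboundary of a vertex function with prescribed value
at the root. Such a `ξ` is obtained by summing `d` along the unique path from the root: for adjacent
`α, β` one of the two paths extends the other by the edge between them.
-/

namespace SimpleGraph

variable {T A : Type*} [AddCommGroup A] {G : SimpleGraph T}

def Walk.dartSum (d : ∀ a b : T, G.Adj a b → A) {u v : T} (p : G.Walk u v) : A :=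
  (p.darts.map fun e => d e.fst e.snd e.adj).sum

@[simp]
lemma Walk.dartSum_nil (d : ∀ a b : T, G.Adj a b → A) {u : T} :
    (Walk.nil : G.Walk u u).dartSum d = 0 := rfl

@[simp]
lemma Walk.dartSum_concat (d : ∀ a b : T, G.Adj a b → A) {u v w : T} (p : G.Walk u v)
    (h : G.Adj v w) : (p.concat h).dartSum d = p.dartSum d + d v w h := by
  simp [Walk.dartSum, Walk.darts_concat]

lemma IsAcyclic.eq_concat_or_eq_concat (hG : G.IsAcyclic) {u v w : T} {p : G.Walk u v}
    {q : G.Walk u w} (hp : p.IsPath) (hq : q.IsPath) (hadj : G.Adj v w) :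
    q = p.concat hadj ∨ p = q.concat hadj.symm := by
  by_cases hv : v ∈ q.support
  · exact .inl (hG.path_concat hp hq hadj hv)
  · exact .inr (hG.path_concat hq hp hadj.symm
      (hG.mem_support_of_ne_mem_support_of_adj_of_isPath hp hq hadj hv))

/-- On a tree, `H¹ = 0`: every antisymmetric edge function is a coboundary. -/
lemma IsTree.exists_sub_eq_of_antisymm (hG : G.IsTree) (d : ∀ a b : T, G.Adj a b → A)
    (hd : ∀ a b (h : G.Adj a b), d b a h.symm = -d a b h) (r : T) (c : A) :
    ∃ ξ : T → A, ξ r = c ∧ ∀ a b (h : G.Adj a b), ξ b - ξ a = d a b h := by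
  choose p hp using fun a => (hG.existsUnique_path r a).exists
  refine ⟨fun a => c + (p a).dartSum d, ?_, fun a b h => ?_⟩
  · simp [(Walk.isPath_iff_nil.mp (hp r)).eq_nil]
  · dsimp only
    rcases hG.isAcyclic.eq_concat_or_eq_concat (hp a) (hp b) h with hb | ha
    · rw [hb, Walk.dartSum_concat]
      abel
    · rw [ha, Walk.dartSum_concat, hd a b h]
      abel

end SimpleGraph

theorem stmt2_general {T : Type*} (G : SimpleGraph T) (hG : G.IsTree) (r : T)
    (V : Type*) [AddCommGroup V]
    (v₁ : V) (v : ∀ α β : T, G.Adj α β → V) :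
    ∃ (ξ : T → V) (η : ∀ α β : T, G.Adj α β → V),
      (∀ (α β : T) (h : G.Adj α β), η α β h = η β α h.symm) ∧
      (∀ (α β : T) (h : G.Adj α β), ξ α + η α β h = v α β h) ∧
      ξ r = v₁ := by
  obtain ⟨ξ, hξr, hξ⟩ := hG.exists_sub_eq_of_antisymm (fun α β h => v β α h.symm - v α β h)
    (fun _ _ _ => (neg_sub _ _).symm) r v₁
  refine ⟨ξ, fun α β h => v α β h - ξ α, fun α β h => ?_, fun _ _ _ => add_sub_cancel _ _, hξr⟩
  rw [sub_eq_sub_iff_sub_eq_sub, ← neg_sub (ξ β), hξ α β h, neg_sub]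

/-- Surjectivity of the map `V^T ⊕ Δ^E → V^E ⊕ V`,
`({ξ_α},{η_{αβ}}) ↦ ({ξ_α + η_{αβ}}, ξ_r)`, for a finite tree `G` with root `r`:
given `v₁ ∈ V` and vectors `v_{αβ}` indexed by ordered pairs of adjacent vertices,
there are families `ξ` and `η` with `η_{αβ} = η_{βα}`, `ξ_α + η_{αβ} = v_{αβ}`,
and `ξ_r = v₁`. -/
theorem stmt2 {T : Type*} [Fintype T] (G : SimpleGraph T) (hG : G.IsTree) (r : T)
    (V : Type*) [AddCommGroup V] [Module ℝ V]
    (v₁ : V) (v : ∀ α β : T, G.Adj α β → V) :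
    ∃ (ξ : T → V) (η : ∀ α β : T, G.Adj α β → V),
      (∀ (α β : T) (h : G.Adj α β), η α β h = η β α h.symm) ∧
      (∀ (α β : T) (h : G.Adj α β), ξ α + η α β h = v α β h) ∧
      ξ r = v₁ :=
  stmt2_general G hG r V v₁ v
end

section
/- Let J : ℂⁿ → End_ℝ(ℂⁿ) be a smooth map with J(x) ∘ J(x) = −id for every x ∈ ℂⁿ and J(x)(W) ⊆ W for every x ∈ W. Let U ⊆ ℝ² be an open neighborhood of 0 and let f : U → ℂⁿ be a smooth map satisfying ∂f/∂s(z) + J(f(z))(∂f/∂t(z)) = 0 for all z ∈ U. Let ℓ ≥ 1 and suppose that f(0) ∈ W, that ∂^{i+j}f/∂s^i∂t^j(0) ∈ W for all i, j ≥ 0 with 1 ≤ i+j ≤ ℓ−1, and that ∂^ℓf/∂s^ℓ(0) ∈ W. Then ∂^{i+j}f/∂s^i∂t^j(0) ∈ W for all i, j ≥ 0 with 1 ≤ i+j ≤ ℓ. -/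
/-- Partial derivative in the `s`-direction of a map `ℝ² → E`. -/
noncomputable def pS {E : Type*} [NormedAddCommGroup E] [NormedSpace ℝ E]
    (f : ℝ × ℝ → E) : ℝ × ℝ → E :=
  fun z => fderiv ℝ f z (1, 0)

/-- Partial derivative in the `t`-direction of a map `ℝ² → E`. -/
noncomputable def pT {E : Type*} [NormedAddCommGroup E] [NormedSpace ℝ E]
    (f : ℝ × ℝ → E) : ℝ × ℝ → E :=
  fun z => fderiv ℝ f z (0, 1)

/-- The iterated partial derivative `∂^{i+j} f / ∂s^i ∂t^j`. -/
noncomputable def pD {E : Type*} [NormedAddCommGroup E] [NormedSpace ℝ E]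
    (f : ℝ × ℝ → E) (i j : ℕ) : ℝ × ℝ → E :=
  pS^[i] (pT^[j] f)

/-- The real subspace `W = ℂᵏ × {0} ⊆ ℂⁿ`. -/
def Wk (n k : ℕ) : Set (Fin n → ℂ) := {x | ∀ i : Fin n, k ≤ (i : ℕ) → x i = 0}

/-!
Since `J² = -1`, the equation says `∂ₜf = J(f) ∂ₛf`. By the Leibniz rule,
`∂ₛⁱ∂ₜʲ⁺¹f(0) = ∂ₛⁱ∂ₜʲ(J(f) ∂ₛf)(0)` is a sum of terms `D(J ∘ f)(0) (D'∂ₛf(0))`. By the chain rule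
the derivatives of `J ∘ f` at `0` only involve derivatives of `J` at `f(0) ∈ W` and derivatives of
`f` of order `< ℓ`, so they map `W` into `W`: the derivative of a smooth map sending `W` into a
closed subspace `V` sends `W` into `V`, being a limit of difference quotients. The factors
`D'∂ₛf(0)` have order `< ℓ`, or order `ℓ` with at most `j` derivatives in `t`, so induction on `j`,
starting from `∂ₛ^ℓ f(0) ∈ W`, concludes. Mixed derivatives are kept as words of directions and
reordered by symmetry of second derivatives.
-/

open Filter
open scoped ContDiff

section DirectionalDerivatives

variable {F E : Type*} [NormedAddCommGroup F] [NormedSpace ℝ F]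
  [NormedAddCommGroup E] [NormedSpace ℝ E] {U : Set F}

noncomputable def dirDeriv (v : F) (h : F → E) : F → E := fun z => fderiv ℝ h z v

/-- `iterDirDeriv [v₁, …, vₘ] h = ∂_{vₘ} ⋯ ∂_{v₁} h`. -/
noncomputable def iterDirDeriv : List F → (F → E) → F → E
  | [], h => h
  | v :: w, h => iterDirDeriv w (dirDeriv v h)

lemma iterDirDeriv_cons (v : F) (w : List F) (h : F → E) :
    iterDirDeriv (v :: w) h = iterDirDeriv w (dirDeriv v h) := rfl

lemma ContDiffOn.dirDeriv (hU : IsOpen U) {h : F → E} (hh : ContDiffOn ℝ ∞ h U) (v : F) :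
    ContDiffOn ℝ ∞ (dirDeriv v h) U :=
  (hh.fderiv_of_isOpen hU (by simp)).clm_apply contDiffOn_const

lemma ContDiffOn.differentiableAt_of_isOpen (hU : IsOpen U) {h : F → E}
    (hh : ContDiffOn ℝ ∞ h U) {z : F} (hz : z ∈ U) : DifferentiableAt ℝ h z :=
  (hh.contDiffAt (hU.mem_nhds hz)).differentiableAt (by simp)

lemma dirDeriv_congr (hU : IsOpen U) {g h : F → E} (hgh : Set.EqOn g h U) (v : F) :
    Set.EqOn (dirDeriv v g) (dirDeriv v h) U := fun z hz => by
  simp only [dirDeriv, (eventuallyEq_of_mem (hU.mem_nhds hz) hgh).fderiv_eq]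

lemma iterDirDeriv_congr (hU : IsOpen U) {g h : F → E} (hgh : Set.EqOn g h U) (w : List F) :
    Set.EqOn (iterDirDeriv w g) (iterDirDeriv w h) U := by
  induction w generalizing g h with
  | nil => exact hgh
  | cons v w ih => exact ih (dirDeriv_congr hU hgh v)

lemma iterDirDeriv_add (hU : IsOpen U) {g h : F → E} (hg : ContDiffOn ℝ ∞ g U)
    (hh : ContDiffOn ℝ ∞ h U) (w : List F) :
    Set.EqOn (iterDirDeriv w (g + h)) (iterDirDeriv w g + iterDirDeriv w h) U := by
  induction w generalizing g h with
  | nil => exact fun _ _ => rfl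
  | cons v w ih =>
    have hsum : Set.EqOn (dirDeriv v (g + h)) (dirDeriv v g + dirDeriv v h) U := fun z hz => by
      simp [dirDeriv, fderiv_add (hg.differentiableAt_of_isOpen hU hz)
        (hh.differentiableAt_of_isOpen hU hz)]
    exact (iterDirDeriv_congr hU hsum w).trans (ih (hg.dirDeriv hU v) (hh.dirDeriv hU v))

lemma dirDeriv_comm (hU : IsOpen U) {h : F → E} (hh : ContDiffOn ℝ ∞ h U) (v v' : F) :
    Set.EqOn (dirDeriv v (dirDeriv v' h)) (dirDeriv v' (dirDeriv v h)) U := fun z hz => by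
  have hsymm : IsSymmSndFDerivAt ℝ h z :=
    (hh.contDiffAt (hU.mem_nhds hz)).isSymmSndFDerivAt (by
      rw [minSmoothness_of_isRCLikeNormedField]; exact WithTop.coe_le_coe.mpr le_top)
  have hsecond : ∀ a b : F, dirDeriv a (dirDeriv b h) z = fderiv ℝ (fderiv ℝ h) z a b := by
    intro a b
    change fderiv ℝ (fun y => fderiv ℝ h y b) z a = _
    simp [fderiv_clm_apply
      ((hh.fderiv_of_isOpen hU (by simp)).differentiableAt_of_isOpen hU hz)
      (differentiableAt_const b)]
  rw [hsecond, hsecond, hsymm.eq]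

lemma iterDirDeriv_perm (hU : IsOpen U) {w w' : List F} (hw : w.Perm w') {h : F → E}
    (hh : ContDiffOn ℝ ∞ h U) : Set.EqOn (iterDirDeriv w h) (iterDirDeriv w' h) U := by
  induction hw generalizing h with
  | nil => exact fun _ _ => rfl
  | cons v _ ih => exact ih (hh.dirDeriv hU v)
  | swap v v' w => exact iterDirDeriv_congr hU (dirDeriv_comm hU hh v v') w
  | trans _ _ ih₁ ih₂ => exact (ih₁ hh).trans (ih₂ hh)

end DirectionalDerivatives

section InvariantSubspaces

variable {E G : Type*} [NormedAddCommGroup E] [NormedSpace ℝ E]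
  [NormedAddCommGroup G] [NormedSpace ℝ G]

def Submodule.clmMapsTo (W : Submodule ℝ E) (V : Submodule ℝ G) :
    Submodule ℝ (E →L[ℝ] G) where
  carrier := {T | ∀ w ∈ W, T w ∈ V}
  add_mem' hS hT w hw := V.add_mem (hS w hw) (hT w hw)
  zero_mem' _ _ := V.zero_mem
  smul_mem' c _ hT w hw := V.smul_mem c (hT w hw)

lemma Submodule.mem_clmMapsTo {W : Submodule ℝ E} {V : Submodule ℝ G} {T : E →L[ℝ] G} :
    T ∈ W.clmMapsTo V ↔ ∀ w ∈ W, T w ∈ V := Iff.rfl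

lemma Submodule.isClosed_clmMapsTo (W : Submodule ℝ E) {V : Submodule ℝ G}
    (hV : IsClosed (V : Set G)) : IsClosed (W.clmMapsTo V : Set (E →L[ℝ] G)) := by
  have hsets : (W.clmMapsTo V : Set (E →L[ℝ] G)) = ⋂ w ∈ W, (fun T => T w) ⁻¹' V := by
    ext T; simp [Submodule.mem_clmMapsTo]
  rw [hsets]
  exact isClosed_biInter fun w _ => hV.preimage (ContinuousLinearMap.apply ℝ G w).continuous

lemma fderiv_mem_clmMapsTo {W : Submodule ℝ E} {V : Submodule ℝ G} (hV : IsClosed (V : Set G))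
    {g : E → G} (hgW : ∀ x ∈ W, g x ∈ V) {x : E} (hx : x ∈ W) (hg : DifferentiableAt ℝ g x) :
    fderiv ℝ g x ∈ W.clmMapsTo V := fun w hw =>
  hV.mem_of_tendsto (hg.hasFDerivAt.lim_real w) <| .of_forall fun c =>
    V.smul_mem c <| V.sub_mem (hgW _ (W.add_mem hx (W.smul_mem _ hw))) (hgW x hx)

end InvariantSubspaces

section LeibnizAndChainRule

universe u

variable {F : Type*} {E G : Type u} [NormedAddCommGroup F] [NormedSpace ℝ F]
  [NormedAddCommGroup E] [NormedSpace ℝ E] [NormedAddCommGroup G] [NormedSpace ℝ G]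
  {U : Set F} {z₀ : F} {W : Submodule ℝ E}

lemma dirDeriv_clm_apply (hU : IsOpen U) {A : F → E →L[ℝ] G} {v : F → E}
    (hA : ContDiffOn ℝ ∞ A U) (hv : ContDiffOn ℝ ∞ v U) (a : F) :
    Set.EqOn (dirDeriv a (fun z => A z (v z)))
      ((fun z => dirDeriv a A z (v z)) + fun z => A z (dirDeriv a v z)) U := fun z hz => by
  simp [dirDeriv, fderiv_clm_apply (hA.differentiableAt_of_isOpen hU hz)
    (hv.differentiableAt_of_isOpen hU hz), add_comm]

lemma iterDirDeriv_clm_apply_mem (hU : IsOpen U) (hz₀ : z₀ ∈ U) {V : Submodule ℝ G}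
    (w : List F) {A : F → E →L[ℝ] G} {v : F → E}
    (hA : ContDiffOn ℝ ∞ A U) (hv : ContDiffOn ℝ ∞ v U)
    (hAw : ∀ u, u.Sublist w → iterDirDeriv u A z₀ ∈ W.clmMapsTo V)
    (hvw : ∀ u, u.Sublist w → iterDirDeriv u v z₀ ∈ W) :
    iterDirDeriv w (fun z => A z (v z)) z₀ ∈ V := by
  induction w generalizing A v with
  | nil => exact hAw [] (.refl _) _ (hvw [] (.refl _))
  | cons a w ih =>
    rw [iterDirDeriv_cons, iterDirDeriv_congr hU (dirDeriv_clm_apply hU hA hv a) w hz₀,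
      iterDirDeriv_add hU ((hA.dirDeriv hU a).clm_apply hv) (hA.clm_apply (hv.dirDeriv hU a))
        w hz₀]
    exact V.add_mem
      (ih (hA.dirDeriv hU a) hv (fun u hu => hAw (a :: u) (hu.cons_cons a))
        (fun u hu => hvw u (hu.cons a)))
      (ih hA (hv.dirDeriv hU a) (fun u hu => hAw u (hu.cons a))
        (fun u hu => hvw (a :: u) (hu.cons_cons a)))

lemma iterDirDeriv_comp_mem (hU : IsOpen U) (hz₀ : z₀ ∈ U) {f : F → E}
    (hf : ContDiffOn ℝ ∞ f U) (w : List F) (hfw : ∀ u, u.Sublist w → iterDirDeriv u f z₀ ∈ W)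
    {V : Submodule ℝ G} (hV : IsClosed (V : Set G)) {g : E → G} (hg : ContDiff ℝ ∞ g)
    (hgW : ∀ x ∈ W, g x ∈ V) : ∀ u, u.Sublist w → iterDirDeriv u (fun z => g (f z)) z₀ ∈ V := by
  induction w generalizing G with
  | nil =>
    intro u hu
    rw [List.sublist_nil.mp hu]
    exact hgW _ (hfw [] (.refl _))
  | cons a w ih =>
    intro u hu
    obtain hu | ⟨r, rfl, hr⟩ := List.sublist_cons_iff.mp hu
    · exact ih (fun u hu => hfw u (hu.cons a)) hV hg hgW u hu
    have hchain : Set.EqOn (dirDeriv a (fun z => g (f z)))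
        (fun z => fderiv ℝ g (f z) (dirDeriv a f z)) U := fun z hz => by
      simp [dirDeriv, fderiv_fun_comp z (hg.differentiable (by simp) (f z))
        (hf.differentiableAt_of_isOpen hU hz)]
    have hg' : ContDiff ℝ ∞ (fderiv ℝ g) := hg.fderiv_right (by simp)
    rw [iterDirDeriv_cons, iterDirDeriv_congr hU hchain r hz₀]
    refine iterDirDeriv_clm_apply_mem hU hz₀ r (hg'.comp_contDiffOn hf) (hf.dirDeriv hU a)
      (fun u hu => ?_) (fun u hu => hfw (a :: u) ((hu.trans hr).cons_cons a))
    exact ih (fun u hu => hfw u (hu.cons a)) (W.isClosed_clmMapsTo hV) hg'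
      (fun x hx => fderiv_mem_clmMapsTo hV hgW hx (hg.differentiable (by simp) x)) u
      (hu.trans hr)

end LeibnizAndChainRule

section TwoVariables

variable {E : Type*} [NormedAddCommGroup E] [NormedSpace ℝ E] {U : Set (ℝ × ℝ)}

/-- The letter `true` stands for `∂/∂s`, the letter `false` for `∂/∂t`. -/
def stDir (b : Bool) : ℝ × ℝ := if b then (1, 0) else (0, 1)

lemma iterDirDeriv_replicate_append {F : Type*} [NormedAddCommGroup F] [NormedSpace ℝ F]
    (m : ℕ) (v : F) (w : List F) (h : F → E) :
    iterDirDeriv (List.replicate m v ++ w) h = iterDirDeriv w ((dirDeriv v)^[m] h) := by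
  induction m generalizing h with
  | zero => rfl
  | succ m ih => rw [List.replicate_succ, List.cons_append, iterDirDeriv_cons, ih]; rfl

lemma pD_eq_iterDirDeriv (f : ℝ × ℝ → E) (i j : ℕ) :
    pD f i j = iterDirDeriv ((List.replicate j false ++ List.replicate i true).map stDir) f := by
  rw [List.map_append, List.map_replicate, List.map_replicate, iterDirDeriv_replicate_append,
    ← List.append_nil (List.replicate i _), iterDirDeriv_replicate_append]
  rfl

lemma iterDirDeriv_map_stDir_eqOn_pD (hU : IsOpen U) {f : ℝ × ℝ → E}
    (hf : ContDiffOn ℝ ∞ f U) (u : List Bool) :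
    Set.EqOn (iterDirDeriv (u.map stDir) f) (pD f (u.count true) (u.count false)) U := by
  have hsort :
      u.Perm (List.replicate (u.count false) false ++ List.replicate (u.count true) true) :=
    List.perm_iff_count.mpr fun b => by cases b <;> simp [List.count_replicate]
  rw [pD_eq_iterDirDeriv]
  exact iterDirDeriv_perm hU (hsort.map stDir) hf

theorem iterDirDeriv_mem_of_pT_eq (hU : IsOpen U) {z₀ : ℝ × ℝ} (hz₀ : z₀ ∈ U)
    {W : Submodule ℝ E} (hW : IsClosed (W : Set E)) {A : E → E →L[ℝ] E} (hA : ContDiff ℝ ∞ A)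
    (hAW : ∀ x ∈ W, A x ∈ W.clmMapsTo W) {f : ℝ × ℝ → E} (hf : ContDiffOn ℝ ∞ f U)
    (hpT : ∀ z ∈ U, pT f z = A (f z) (pS f z)) (ℓ : ℕ)
    (hlow : ∀ u : List Bool, u.length < ℓ → iterDirDeriv (u.map stDir) f z₀ ∈ W)
    (htop : iterDirDeriv ((List.replicate ℓ true).map stDir) f z₀ ∈ W) (u : List Bool)
    (hu : u.length ≤ ℓ) : iterDirDeriv (u.map stDir) f z₀ ∈ W := by
  obtain hlt | hlen := hu.lt_or_eq
  · exact hlow u hlt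
  suffices ∀ j, ∀ u : List Bool, u.length = ℓ → u.count false ≤ j →
      iterDirDeriv (u.map stDir) f z₀ ∈ W from this _ u hlen le_rfl
  intro j
  induction j with
  | zero =>
    intro u hlen hcount
    have hfalse : false ∉ u := List.count_eq_zero.mp (Nat.le_zero.mp hcount)
    rwa [List.eq_replicate_iff.mpr ⟨hlen, fun b hb => by cases b; exacts [absurd hb hfalse, rfl]⟩]
  | succ j ih =>
    intro u hlen hcount
    obtain hgt | hle := Nat.lt_or_ge j (u.count false)
    swap
    · exact ih u hlen hle
    have hfalse : false ∈ u := List.count_pos_iff.mp (by omega)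
    have hlen' : (u.erase false).length + 1 = ℓ := by
      rw [List.length_erase_of_mem hfalse]; have := List.length_pos_of_mem hfalse; omega
    have hcount' : (u.erase false).count false ≤ j := by rw [List.count_erase_self]; omega
    have hpT' : Set.EqOn (dirDeriv (stDir false) f)
        (fun z => A (f z) (dirDeriv (stDir true) f z)) U := fun z hz => hpT z hz
    rw [iterDirDeriv_perm hU ((List.perm_cons_erase hfalse).map stDir) hf hz₀, List.map_cons,
      iterDirDeriv_cons, iterDirDeriv_congr hU hpT' _ hz₀]
    refine iterDirDeriv_clm_apply_mem (W := W) hU hz₀ _ (hA.comp_contDiffOn hf)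
      (hf.dirDeriv hU _) (fun v hv => ?_) (fun v hv => ?_) <;>
      obtain ⟨r, hr, rfl⟩ := List.sublist_map_iff.mp hv
    · refine iterDirDeriv_comp_mem hU hz₀ hf ((u.erase false).map stDir) (fun v hv => ?_)
        (W.isClosed_clmMapsTo hW) hA hAW _ hv
      obtain ⟨r, hr, rfl⟩ := List.sublist_map_iff.mp hv
      exact hlow r (by have := hr.length_le; omega)
    · change iterDirDeriv ((true :: r).map stDir) f z₀ ∈ W
      have hlen_r : (true :: r).length ≤ ℓ := by
        rw [List.length_cons]; have := hr.length_le; omega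
      obtain hlt | heq := hlen_r.lt_or_eq
      · exact hlow _ hlt
      · exact ih _ heq (by simpa using (hr.count_le false).trans hcount')

end TwoVariables

def WkSubmodule (n k : ℕ) : Submodule ℝ (Fin n → ℂ) where
  carrier := Wk n k
  add_mem' ha hb i hi := by simp [ha i hi, hb i hi]
  zero_mem' _ _ := rfl
  smul_mem' c _ hx i hi := by simp [hx i hi]

lemma isClosed_Wk (n k : ℕ) : IsClosed (Wk n k) := by
  simp only [Wk, Set.ofPred_forall]
  exact isClosed_iInter fun i => isClosed_iInter fun _ =>
    isClosed_eq (continuous_apply i) continuous_const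

theorem stmt3_general (n k : ℕ)
    (J : (Fin n → ℂ) → ((Fin n → ℂ) →L[ℝ] (Fin n → ℂ)))
    (hJsmooth : ContDiff ℝ (⊤ : ℕ∞) J)
    (hJsq : ∀ x v, J x (J x v) = -v)
    (hJW : ∀ x ∈ Wk n k, ∀ w ∈ Wk n k, J x w ∈ Wk n k)
    (U : Set (ℝ × ℝ)) (hU : IsOpen U) (h0 : (0, 0) ∈ U)
    (f : ℝ × ℝ → (Fin n → ℂ)) (hf : ContDiffOn ℝ (⊤ : ℕ∞) f U)
    (hol : ∀ z ∈ U, pS f z + J (f z) (pT f z) = 0)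
    (ℓ : ℕ)
    (hf0 : f (0, 0) ∈ Wk n k)
    (hjets : ∀ i j : ℕ, 1 ≤ i + j → i + j ≤ ℓ - 1 → pD f i j (0, 0) ∈ Wk n k)
    (htop : pD f ℓ 0 (0, 0) ∈ Wk n k) :
    ∀ i j : ℕ, 1 ≤ i + j → i + j ≤ ℓ → pD f i j (0, 0) ∈ Wk n k := by
  have hpT : ∀ z ∈ U, pT f z = J (f z) (pS f z) := fun z hz => by
    have hJhol := congrArg (J (f z)) (hol z hz)
    rw [map_add, hJsq, map_zero, add_neg_eq_zero] at hJhol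
    exact hJhol.symm
  have hlow (u : List Bool) (hu : u.length < ℓ) :
      iterDirDeriv (u.map stDir) f (0, 0) ∈ WkSubmodule n k := by
    rw [iterDirDeriv_map_stDir_eqOn_pD hU hf u h0]
    have hcount := u.count_true_add_count_false
    cases u with
    | nil => exact hf0
    | cons b u => exact hjets _ _ (by rw [List.length_cons] at hcount; omega) (by omega)
  intro i j _ hij
  rw [pD_eq_iterDirDeriv]
  rw [pD_eq_iterDirDeriv, List.replicate_zero, List.nil_append] at htop
  exact iterDirDeriv_mem_of_pT_eq hU h0 (isClosed_Wk n k) hJsmooth hJW hf hpT ℓ hlow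
    htop _ (by simp only [List.length_append, List.length_replicate]; omega)

theorem stmt3 (n k : ℕ) (hn : 1 ≤ n) (hk : k ≤ n - 1)
    (J : (Fin n → ℂ) → ((Fin n → ℂ) →L[ℝ] (Fin n → ℂ)))
    (hJsmooth : ContDiff ℝ (⊤ : ℕ∞) J)
    (hJsq : ∀ x v, J x (J x v) = -v)
    (hJW : ∀ x ∈ Wk n k, ∀ w ∈ Wk n k, J x w ∈ Wk n k)
    (U : Set (ℝ × ℝ)) (hU : IsOpen U) (h0 : (0, 0) ∈ U)
    (f : ℝ × ℝ → (Fin n → ℂ)) (hf : ContDiffOn ℝ (⊤ : ℕ∞) f U)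
    (hol : ∀ z ∈ U, pS f z + J (f z) (pT f z) = 0)
    (ℓ : ℕ) (hℓ : 1 ≤ ℓ)
    (hf0 : f (0, 0) ∈ Wk n k)
    (hjets : ∀ i j : ℕ, 1 ≤ i + j → i + j ≤ ℓ - 1 → pD f i j (0, 0) ∈ Wk n k)
    (htop : pD f ℓ 0 (0, 0) ∈ Wk n k) :
    ∀ i j : ℕ, 1 ≤ i + j → i + j ≤ ℓ → pD f i j (0, 0) ∈ Wk n k :=
  stmt3_general n k J hJsmooth hJsq hJW U hU h0 f hf hol ℓ hf0 hjets htop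
end

section
/- Let φ : ℂⁿ → ℂⁿ be a smooth map with φ(0) = 0 and φ(W) ⊆ W. Let U ⊆ ℝ² be an open neighborhood of 0, let ℓ ≥ 1, and let f : U → ℂⁿ be a smooth map with f(0) = 0 such that ∂^{i+j}f/∂s^i∂t^j(0) ∈ W for all i, j ≥ 0 with 1 ≤ i+j ≤ ℓ−1. Then ∂^ℓ(φ∘f)/∂s^ℓ(0) − Dφ(0)(∂^ℓf/∂s^ℓ(0)) ∈ W, where Dφ(0) denotes the (real) derivative of φ at 0; that is, ∂^ℓ(φ∘f)/∂s^ℓ(0) and Dφ(0)(∂^ℓf/∂s^ℓ(0)) have the same image in the quotient ℂⁿ/W. -/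
/-!
Faà di Bruno expresses `∂ₛ^ℓ (φ ∘ f)(0)` as a sum over ordered partitions of `{1, …, ℓ}` of
`D^m φ(0)` applied to the `s`-derivatives of `f` of the orders given by the part sizes. The
one-block partition contributes `Dφ(0)(∂ₛ^ℓ f(0))`. Every other partition has at least two
blocks, so all its parts have size between `1` and `ℓ - 1`: the corresponding derivatives of `f`
lie in `W`, and since `φ` preserves the subspace `W`, so does every `D^m φ(0)` on arguments
from `W`.
-/

open Set Function
open scoped ContDiff

namespace OrderedFinpartition

def single (n : ℕ) (hn : 0 < n) : OrderedFinpartition n where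
  length := 1
  partSize _ := n
  partSize_pos _ := hn
  emb _ := id
  emb_strictMono _ := strictMono_id
  parts_strictMono := Subsingleton.strictMono _
  disjoint _ _ _ _ hab := absurd (Subsingleton.elim _ _) hab
  cover x := ⟨0, x, rfl⟩

variable {n : ℕ}

lemma sum_partSize (c : OrderedFinpartition n) : ∑ i, c.partSize i = n := by
  simpa using c.sum_sigma_eq_sum (fun _ => (1 : ℕ))

lemma eq_single_of_length_eq_one (hn : 0 < n) {c : OrderedFinpartition n} (hc : c.length = 1) :
    c = single n hn := by
  have hsum := c.sum_partSize
  obtain ⟨length, partSize, _, emb, emb_strictMono, _, _, _⟩ := c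
  subst hc
  obtain rfl : partSize = fun _ => n :=
    funext fun i => by simpa [Subsingleton.elim i 0] using hsum
  obtain rfl : emb = fun _ => id := funext fun i => (emb_strictMono i).eq_id
  rfl

lemma partSize_lt_of_ne_single (hn : 0 < n) {c : OrderedFinpartition n} (hc : c ≠ single n hn)
    (i : Fin c.length) : c.partSize i < n := by
  have hlen : 1 < c.length := by
    have := c.length_pos hn
    have : c.length ≠ 1 := fun h => hc (eq_single_of_length_eq_one hn h)
    omega
  obtain ⟨j, hji⟩ := Fintype.exists_ne_of_one_lt_card (by simpa using hlen) i
  have := Finset.sum_le_sum_of_subset (f := c.partSize) (Finset.subset_univ {i, j})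
  rw [Finset.sum_pair hji.symm, c.sum_partSize] at this
  have := c.partSize_pos j
  omega

end OrderedFinpartition

section Calculus

variable {𝕜 : Type*} [NontriviallyNormedField 𝕜] {E F G : Type*} [NormedAddCommGroup E]
  [NormedSpace 𝕜 E] [NormedAddCommGroup F] [NormedSpace 𝕜 F] [NormedAddCommGroup G]
  [NormedSpace 𝕜 G]

theorem FormalMultilinearSeries.taylorComp_apply_const_sub_mem
    {q : FormalMultilinearSeries 𝕜 F G} {p : FormalMultilinearSeries 𝕜 E F}
    {W : Submodule 𝕜 F} {V : Submodule 𝕜 G} {n : ℕ} (hn : 0 < n) {v : E}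
    (hp : ∀ j, 0 < j → j < n → p j (fun _ => v) ∈ W)
    (hq : ∀ m (w : Fin m → F), (∀ i, w i ∈ W) → q m w ∈ V) :
    q.taylorComp p n (fun _ => v) - q 1 (fun _ => p n (fun _ => v)) ∈ V := by
  rw [FormalMultilinearSeries.taylorComp, sum_apply,
    ← Finset.add_sum_erase _ _ (Finset.mem_univ (OrderedFinpartition.single n hn))]
  change q 1 (fun _ => p n (fun _ => v)) + _ - _ ∈ V
  rw [add_sub_cancel_left]
  exact V.sum_mem fun c hc => hq _ _ fun i => hp _ (c.partSize_pos i)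
    (c.partSize_lt_of_ne_single hn (Finset.ne_of_mem_erase hc) i)

theorem iterate_fderiv_apply_eq_iteratedFDeriv {f : E → F} {U : Set E} (hU : IsOpen U)
    (hf : ContDiffOn 𝕜 ∞ f U) (v : E) (m : ℕ) :
    ∀ x ∈ U, (fun g y => fderiv 𝕜 g y v)^[m] f x = iteratedFDeriv 𝕜 m f x (fun _ => v) := by
  induction m with
  | zero => simp
  | succ m ih =>
    intro x hx
    have hdiff : DifferentiableAt 𝕜 (iteratedFDeriv 𝕜 m f) x :=
      (hf.contDiffAt (hU.mem_nhds hx)).differentiableAt_iteratedFDeriv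
        (by exact_mod_cast ENat.natCast_lt_top m)
    have heq : (fun g y => fderiv 𝕜 g y v)^[m] f =ᶠ[nhds x]
        fun y => iteratedFDeriv 𝕜 m f y (fun _ => v) :=
      Filter.eventuallyEq_of_mem (hU.mem_nhds hx) ih
    rw [iterate_succ_apply', heq.fderiv_eq, fderiv_continuousMultilinear_apply_const_apply hdiff,
      iteratedFDeriv_succ_apply_left]
    rfl

theorem iteratedFDeriv_mem_of_mapsTo {W : Submodule 𝕜 E} {V : Submodule 𝕜 F}
    (hW : W.ClosedComplemented) (hV : V.ClosedComplemented) {φ : E → F} {n : WithTop ℕ∞}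
    (hφ : ContDiff 𝕜 n φ) (hφW : MapsTo φ W V) {m : ℕ} (hm : m ≤ n) {x : E} (hx : x ∈ W)
    {w : Fin m → E} (hw : ∀ i, w i ∈ W) :
    iteratedFDeriv 𝕜 m φ x w ∈ V := by
  obtain ⟨P, hP⟩ := hW
  obtain ⟨Q, hQ⟩ := hV
  set R : E →L[𝕜] E := W.subtypeL ∘L P
  have hR : ∀ y ∈ W, R y = y := fun y hy => by simp [R, hP ⟨y, hy⟩]
  -- `φ ∘ R` takes values in `V`, hence factors smoothly through the inclusion of `V`.
  have hfactor : φ ∘ R = V.subtypeL ∘ (Q ∘ φ ∘ R) := by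
    funext y
    have : φ (R y) ∈ V := hφW (by simp [R])
    simp [hQ ⟨_, this⟩]
  have hcomp : iteratedFDeriv 𝕜 m (φ ∘ R) x w = iteratedFDeriv 𝕜 m φ x w := by
    simp [R.iteratedFDeriv_comp_right hφ x hm, hR x hx, hR _ (hw _)]
  rw [← hcomp, hfactor, V.subtypeL.iteratedFDeriv_comp_left
    (Q.contDiff.comp (hφ.comp R.contDiff)).contDiffAt hm]
  exact Submodule.coe_mem _

end Calculus

def wkSubmodule (n k : ℕ) : Submodule ℝ (Fin n → ℂ) where
  carrier := Wk n k
  add_mem' ha hb i hi := by simp [ha i hi, hb i hi]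
  zero_mem' _ _ := rfl
  smul_mem' _ _ hx i hi := by simp [hx i hi]

theorem stmt4_general (n k : ℕ)
    (φ : (Fin n → ℂ) → (Fin n → ℂ))
    (hφsmooth : ContDiff ℝ (⊤ : ℕ∞) φ)
    (hφW : ∀ x ∈ Wk n k, φ x ∈ Wk n k)
    (U : Set (ℝ × ℝ)) (hU : IsOpen U) (h0 : (0, 0) ∈ U)
    (f : ℝ × ℝ → (Fin n → ℂ)) (hf : ContDiffOn ℝ (⊤ : ℕ∞) f U)
    (ℓ : ℕ) (hℓ : 1 ≤ ℓ)
    (hf0 : f (0, 0) = 0)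
    (hjets : ∀ i j : ℕ, 1 ≤ i + j → i + j ≤ ℓ - 1 → pD f i j (0, 0) ∈ Wk n k) :
    pD (φ ∘ f) ℓ 0 (0, 0) - fderiv ℝ φ 0 (pD f ℓ 0 (0, 0)) ∈ Wk n k := by
  have hW : (wkSubmodule n k).ClosedComplemented := .of_finiteDimensional _
  have hpD : ∀ g : ℝ × ℝ → Fin n → ℂ, ContDiffOn ℝ ∞ g U → ∀ m,
      pD g m 0 (0, 0) = iteratedFDeriv ℝ m g (0, 0) (fun _ => (1, 0)) :=
    fun g hg m => iterate_fderiv_apply_eq_iteratedFDeriv hU hg (1, 0) m _ h0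
  have hp : ∀ j, 0 < j → j < ℓ →
      ftaylorSeries ℝ f (0, 0) j (fun _ => (1, 0)) ∈ wkSubmodule n k :=
    fun j hj hjℓ => hpD f hf j ▸ hjets j 0 (by omega) (by omega)
  have hq : ∀ m (w : Fin m → Fin n → ℂ), (∀ i, w i ∈ wkSubmodule n k) →
      ftaylorSeries ℝ φ (f (0, 0)) m w ∈ wkSubmodule n k := fun m w hw => by
    rw [hf0]
    exact iteratedFDeriv_mem_of_mapsTo hW hW hφsmooth hφW (by exact_mod_cast le_top)
      (zero_mem _) hw
  rw [hpD _ (hφsmooth.comp_contDiffOn hf), hpD f hf,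
    iteratedFDeriv_comp hφsmooth.contDiffAt (hf.contDiffAt (hU.mem_nhds h0))
      (by exact_mod_cast le_top)]
  show _ ∈ wkSubmodule n k
  simpa [ftaylorSeries, hf0, iteratedFDeriv_one_apply] using
    FormalMultilinearSeries.taylorComp_apply_const_sub_mem hℓ hp hq

theorem stmt4 (n k : ℕ) (hn : 1 ≤ n) (hk : k ≤ n - 1)
    (φ : (Fin n → ℂ) → (Fin n → ℂ))
    (hφsmooth : ContDiff ℝ (⊤ : ℕ∞) φ)
    (hφ0 : φ 0 = 0)
    (hφW : ∀ x ∈ Wk n k, φ x ∈ Wk n k)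
    (U : Set (ℝ × ℝ)) (hU : IsOpen U) (h0 : (0, 0) ∈ U)
    (f : ℝ × ℝ → (Fin n → ℂ)) (hf : ContDiffOn ℝ (⊤ : ℕ∞) f U)
    (ℓ : ℕ) (hℓ : 1 ≤ ℓ)
    (hf0 : f (0, 0) = 0)
    (hjets : ∀ i j : ℕ, 1 ≤ i + j → i + j ≤ ℓ - 1 → pD f i j (0, 0) ∈ Wk n k) :
    pD (φ ∘ f) ℓ 0 (0, 0) - fderiv ℝ φ 0 (pD f ℓ 0 (0, 0)) ∈ Wk n k :=
  stmt4_general n k φ hφsmooth hφW U hU h0 f hf ℓ hℓ hf0 hjets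
end

section
/- Let X and Y be subspaces of V with X ≠ {0}, Y ≠ {0}, X ≠ V and Y ≠ V. Then ∠_M(X, Y) = ∠_M(Y^⊥, X^⊥), where ⊥ denotes orthogonal complement. -/
open scoped RealInnerProductSpace

/-- The angle `∠(x,y) = arccos(|⟨x,y⟩|/(‖x‖‖y‖)) ∈ [0,π/2]` between two vectors. -/
noncomputable def ang {V : Type*} [NormedAddCommGroup V] [InnerProductSpace ℝ V]
    (x y : V) : ℝ :=
  Real.arccos (|(inner ℝ x y : ℝ)| / (‖x‖ * ‖y‖))

/-- The angle `∠_M(X,y) = inf{∠(x,y) : 0 ≠ x ∈ X}` between a subspace and a vector. -/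
noncomputable def angMv {V : Type*} [NormedAddCommGroup V] [InnerProductSpace ℝ V]
    (X : Submodule ℝ V) (y : V) : ℝ :=
  sInf ((fun x => ang x y) '' {x : V | x ∈ X ∧ x ≠ 0})

/-- The maximal angle `∠_M(X,Y) = sup{∠_M(X,y) : 0 ≠ y ∈ Y}` between two subspaces. -/
noncomputable def angMM {V : Type*} [NormedAddCommGroup V] [InnerProductSpace ℝ V]
    (X Y : Submodule ℝ V) : ℝ :=
  sSup ((fun y => angMv X y) '' {y : V | y ∈ Y ∧ y ≠ 0})

/-!
The angle `∠_M(X, y)` is attained at the orthogonal projection of `y` onto `X`, so its sine is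
`‖P_{Xᗮ} y‖ / ‖y‖`, and the sine of `∠_M(X, Y)` is `s(Xᗮ, Y) := sup {‖P_{Xᗮ} y‖ / ‖y‖ : 0 ≠ y ∈ Y}`,
the norm of `P_{Xᗮ} P_Y`. Likewise the sine of `∠_M(Yᗮ, Xᗮ)` is `s(Y, Xᗮ)`, the norm of the adjoint
`P_Y P_{Xᗮ}`; that `s(A, B) = s(B, A)` is checked directly from `‖P_A b‖² = ⟪P_B P_A b, b⟫`.
-/

open Real Submodule

section

variable {V : Type*} [NormedAddCommGroup V] [InnerProductSpace ℝ V]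

lemma inner_starProjection_right_of_mem {K : Submodule ℝ V} [K.HasOrthogonalProjection]
    {x : V} (hx : x ∈ K) (y : V) : ⟪x, K.starProjection y⟫ = ⟪x, y⟫ := by
  rw [← inner_starProjection_left_eq_right, starProjection_eq_self_iff.mpr hx]

lemma inner_starProjection_self (K : Submodule ℝ V) [K.HasOrthogonalProjection] (y : V) :
    ⟪K.starProjection y, y⟫ = ‖K.starProjection y‖ ^ 2 := by
  rw [← inner_starProjection_right_of_mem (K.starProjection_apply_mem y),
    real_inner_self_eq_norm_sq]

lemma angMv_eq_arccos {X : Submodule ℝ V} [X.HasOrthogonalProjection] (hX : X ≠ ⊥) {y : V}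
    (hy : y ≠ 0) : angMv X y = arccos (‖X.starProjection y‖ / ‖y‖) := by
  refine IsLeast.csInf_eq ⟨?_, ?_⟩
  · by_cases hp : X.starProjection y = 0
    · obtain ⟨x, hxX, hx⟩ := exists_mem_ne_zero_of_ne_bot hX
      refine ⟨x, ⟨hxX, hx⟩, ?_⟩
      change arccos _ = _
      rw [← inner_starProjection_right_of_mem hxX, hp]
      simp
    · refine ⟨X.starProjection y, ⟨X.starProjection_apply_mem y, hp⟩, ?_⟩
      change arccos _ = _
      rw [inner_starProjection_self, abs_of_nonneg (sq_nonneg _), sq,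
        mul_div_mul_left _ _ (norm_ne_zero_iff.mpr hp)]
  · rintro _ ⟨x, ⟨hxX, hx⟩, rfl⟩
    refine arccos_le_arccos ?_
    rw [← inner_starProjection_right_of_mem hxX, ← div_div]
    gcongr
    rw [div_le_iff₀' (norm_pos_iff.mpr hx)]
    exact abs_real_inner_le_norm _ _

lemma angMv_eq_arcsin {X : Submodule ℝ V} [X.HasOrthogonalProjection] (hX : X ≠ ⊥) {y : V}
    (hy : y ≠ 0) : angMv X y = arcsin (‖Xᗮ.starProjection y‖ / ‖y‖) := by
  have hy' : ‖y‖ ≠ 0 := norm_ne_zero_iff.mpr hy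
  rw [angMv_eq_arccos hX hy, arccos_eq_arcsin (by positivity),
    ← sqrt_sq (by positivity : 0 ≤ ‖Xᗮ.starProjection y‖ / ‖y‖)]
  congr 2
  field_simp
  linarith [norm_sq_eq_add_norm_sq_starProjection y X]

noncomputable def supProjRatio (K Y : Submodule ℝ V) [K.HasOrthogonalProjection] : ℝ :=
  sSup ((fun y => ‖K.starProjection y‖ / ‖y‖) '' {y : V | y ∈ Y ∧ y ≠ 0})

section

variable (K Y : Submodule ℝ V) [K.HasOrthogonalProjection]

lemma bddAbove_projRatio :
    BddAbove ((fun y => ‖K.starProjection y‖ / ‖y‖) '' {y : V | y ∈ Y ∧ y ≠ 0}) := by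
  refine ⟨1, ?_⟩
  rintro _ ⟨y, -, rfl⟩
  exact div_le_one_of_le₀ (K.norm_starProjection_apply_le y) (norm_nonneg y)

lemma supProjRatio_nonneg : 0 ≤ supProjRatio K Y :=
  Real.sSup_nonneg (by rintro _ ⟨y, -, rfl⟩; positivity)

lemma le_supProjRatio {y : V} (hy : y ∈ Y) : ‖K.starProjection y‖ ≤ supProjRatio K Y * ‖y‖ := by
  rcases eq_or_ne y 0 with rfl | hy0
  · simp
  rw [← div_le_iff₀ (norm_pos_iff.mpr hy0)]
  exact le_csSup (bddAbove_projRatio K Y) ⟨y, ⟨hy, hy0⟩, rfl⟩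

end

lemma angMM_eq_arcsin_supProjRatio {X Y : Submodule ℝ V} [X.HasOrthogonalProjection]
    (hX : X ≠ ⊥) (hY : Y ≠ ⊥) : angMM X Y = arcsin (supProjRatio Xᗮ Y) := by
  have hne : {y : V | y ∈ Y ∧ y ≠ 0}.Nonempty := exists_mem_ne_zero_of_ne_bot hY
  rw [angMM, supProjRatio, monotone_arcsin.map_csSup_of_continuousAt
    continuous_arcsin.continuousAt (hne.image _) (bddAbove_projRatio Xᗮ Y), Set.image_image]
  exact congrArg sSup (Set.image_congr fun y hy => angMv_eq_arcsin hX hy.2)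

lemma norm_starProjection_le_of_forall_mem {A B : Submodule ℝ V} [A.HasOrthogonalProjection]
    [B.HasOrthogonalProjection] {c : ℝ} (hc : 0 ≤ c)
    (h : ∀ a ∈ A, ‖B.starProjection a‖ ≤ c * ‖a‖) {b : V} (hb : b ∈ B) :
    ‖A.starProjection b‖ ≤ c * ‖b‖ := by
  set u := A.starProjection b
  rcases eq_or_ne u 0 with hu | hu
  · rw [hu, norm_zero]
    positivity
  refine le_of_mul_le_mul_left ?_ (norm_pos_iff.mpr hu)
  calc ‖u‖ * ‖u‖ = ⟪B.starProjection u, b⟫ := by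
        rw [inner_starProjection_left_eq_right, starProjection_eq_self_iff.mpr hb, ← sq]
        exact (inner_starProjection_self A b).symm
    _ ≤ ‖B.starProjection u‖ * ‖b‖ := real_inner_le_norm _ _
    _ ≤ c * ‖u‖ * ‖b‖ := by gcongr; exact h u (A.starProjection_apply_mem b)
    _ = ‖u‖ * (c * ‖b‖) := by ring

lemma supProjRatio_le_supProjRatio (A B : Submodule ℝ V) [A.HasOrthogonalProjection]
    [B.HasOrthogonalProjection] : supProjRatio A B ≤ supProjRatio B A := by
  refine Real.sSup_le ?_ (supProjRatio_nonneg B A)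
  rintro _ ⟨b, ⟨hb, -⟩, rfl⟩
  refine div_le_of_le_mul₀ (norm_nonneg _) (supProjRatio_nonneg B A) ?_
  exact norm_starProjection_le_of_forall_mem (supProjRatio_nonneg B A)
    (fun a ha => le_supProjRatio B A ha) hb

lemma supProjRatio_comm (A B : Submodule ℝ V) [A.HasOrthogonalProjection]
    [B.HasOrthogonalProjection] : supProjRatio A B = supProjRatio B A :=
  (supProjRatio_le_supProjRatio A B).antisymm (supProjRatio_le_supProjRatio B A)

end

theorem stmt7 {V : Type*} [NormedAddCommGroup V] [InnerProductSpace ℝ V]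
    [FiniteDimensional ℝ V]
    (X Y : Submodule ℝ V) (hX0 : X ≠ ⊥) (hY0 : Y ≠ ⊥) (hXT : X ≠ ⊤) (hYT : Y ≠ ⊤) :
    angMM X Y = angMM Yᗮ Xᗮ := by
  have hXo : Xᗮ ≠ ⊥ := fun h => hXT (orthogonal_eq_bot_iff.mp h)
  have hYo : Yᗮ ≠ ⊥ := fun h => hYT (orthogonal_eq_bot_iff.mp h)
  rw [angMM_eq_arcsin_supProjRatio hX0 hY0, angMM_eq_arcsin_supProjRatio hYo hXo,
    supProjRatio_comm]
  simp only [orthogonal_orthogonal]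
end

section
/- Let J : V → V be a linear isometry with J ∘ J = −id, and for a subspace X ⊆ V let X^ω := (J X)^⊥ denote its ω-orthogonal complement. Then for all subspaces X, Y of V with X ≠ {0}, Y ≠ {0}, X ≠ V and Y ≠ V, one has ∠_M(X, Y) = ∠_M(Y^ω, X^ω). -/
open scoped RealInnerProductSpace

/-!
The angle `∠_M(X, y)` is attained at the orthogonal projection of `y` onto `X`, so its sine is
`‖P_{Xᗮ} y‖ / ‖y‖` and `sin ∠_M(X, Y) = ‖P_{Xᗮ} P_Y‖`. Taking adjoints, `‖P_{Xᗮ} P_Y‖ = ‖P_Y P_{Xᗮ}‖`,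
and transporting by the isometry `J`, which maps `Xᗮ` onto `(J X)ᗮ` and `Y` onto `(J Y)ᗮᗮ`,
identifies the latter with `sin ∠_M((J Y)ᗮ, (J X)ᗮ)`.
-/

open Real Submodule

section Projection

variable {V W : Type*} [NormedAddCommGroup V] [InnerProductSpace ℝ V]
  [NormedAddCommGroup W] [InnerProductSpace ℝ W]

noncomputable def projRatio (K : Submodule ℝ V) [K.HasOrthogonalProjection] (y : V) : ℝ :=
  ‖K.starProjection y‖ / ‖y‖

/-- `projRatioSup A B` is the operator norm of `A.starProjection ∘ B.starProjection`. -/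
noncomputable def projRatioSup (A : Submodule ℝ V) [A.HasOrthogonalProjection]
    (B : Submodule ℝ V) : ℝ :=
  sSup (projRatio A '' {y : V | y ∈ B ∧ y ≠ 0})

variable (A B K : Submodule ℝ V) [A.HasOrthogonalProjection] [K.HasOrthogonalProjection]

lemma projRatio_nonneg (y : V) : 0 ≤ projRatio K y := by
  unfold projRatio; positivity

lemma projRatio_le_one (y : V) : projRatio K y ≤ 1 :=
  div_le_one_of_le₀ (K.norm_starProjection_apply_le y) (norm_nonneg y)

lemma real_inner_starProjection_self (y : V) :
    ⟪K.starProjection y, y⟫ = ‖K.starProjection y‖ ^ 2 :=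
  K.re_inner_starProjection_eq_normSq y

lemma real_inner_eq_inner_starProjection {x : V} (hx : x ∈ K) (y : V) :
    ⟪x, y⟫ = ⟪x, K.starProjection y⟫ := by
  rw [← K.inner_starProjection_left_eq_right, K.starProjection_eq_self_iff.mpr hx]

lemma abs_inner_div_le_projRatio {x : V} (hx : x ∈ K) (y : V) :
    |⟪x, y⟫| / (‖x‖ * ‖y‖) ≤ projRatio K y :=
  calc |⟪x, y⟫| / (‖x‖ * ‖y‖)
      ≤ ‖x‖ * ‖K.starProjection y‖ / (‖x‖ * ‖y‖) := by
        rw [real_inner_eq_inner_starProjection K hx]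
        gcongr
        exact abs_real_inner_le_norm _ _
    _ = ‖x‖ / ‖x‖ * projRatio K y := mul_div_mul_comm _ _ _ _
    _ ≤ projRatio K y := mul_le_of_le_one_left (projRatio_nonneg K y) (div_self_le_one _)

lemma exists_ang_eq_arccos_projRatio (hK : K ≠ ⊥) (y : V) :
    ∃ x ∈ K, x ≠ 0 ∧ ang x y = arccos (projRatio K y) := by
  by_cases hP : K.starProjection y = 0
  · obtain ⟨x, hxK, hx0⟩ := exists_mem_ne_zero_of_ne_bot hK
    refine ⟨x, hxK, hx0, ?_⟩
    simp [ang, projRatio, hP, real_inner_eq_inner_starProjection K hxK y]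
  · refine ⟨K.starProjection y, K.starProjection_apply_mem y, hP, ?_⟩
    rw [ang, projRatio, real_inner_starProjection_self, abs_of_nonneg (by positivity), sq,
      mul_div_mul_left _ _ (norm_ne_zero_iff.mpr hP)]

lemma angMv_eq_arccos_projRatio (hK : K ≠ ⊥) (y : V) : angMv K y = arccos (projRatio K y) := by
  refine IsLeast.csInf_eq ⟨?_, ?_⟩
  · obtain ⟨x, hxK, hx0, hx⟩ := exists_ang_eq_arccos_projRatio K hK y
    exact ⟨x, ⟨hxK, hx0⟩, hx⟩
  · rintro _ ⟨x, ⟨hxK, -⟩, rfl⟩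
    exact arccos_le_arccos (abs_inner_div_le_projRatio K hxK y)

lemma arccos_projRatio {y : V} (hy : y ≠ 0) :
    arccos (projRatio K y) = arcsin (projRatio Kᗮ y) := by
  rw [arccos_eq_arcsin (projRatio_nonneg K y), ← sqrt_sq (projRatio_nonneg Kᗮ y)]
  congr 2
  have hy' : 0 < ‖y‖ := norm_pos_iff.mpr hy
  have h := K.norm_sq_eq_add_norm_sq_starProjection y
  unfold projRatio
  field_simp
  linarith

lemma bddAbove_image_projRatio (s : Set V) : BddAbove (projRatio K '' s) :=
  ⟨1, by rintro _ ⟨y, -, rfl⟩; exact projRatio_le_one K y⟩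

lemma angMM_eq_arcsin_projRatioSup (hK : K ≠ ⊥) (Y : Submodule ℝ V) :
    angMM K Y = arcsin (projRatioSup Kᗮ Y) := by
  set S := {y : V | y ∈ Y ∧ y ≠ 0}
  have himg : (fun y => angMv K y) '' S = arcsin '' (projRatio Kᗮ '' S) := by
    rw [← Set.image_comp]
    exact Set.image_congr fun y hy => by
      rw [Function.comp_apply, angMv_eq_arccos_projRatio K hK, arccos_projRatio K hy.2]
  rw [angMM, projRatioSup, himg]
  rcases (projRatio Kᗮ '' S).eq_empty_or_nonempty with h | h
  · rw [h, Set.image_empty, Real.sSup_empty, arcsin_zero]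
  · exact (monotone_arcsin.map_csSup_of_continuousAt continuous_arcsin.continuousAt h
      (bddAbove_image_projRatio Kᗮ S)).symm

lemma projRatioSup_nonneg : 0 ≤ projRatioSup A B :=
  Real.sSup_nonneg (by rintro _ ⟨y, -, rfl⟩; exact projRatio_nonneg A y)

lemma projRatio_le_projRatioSup {u : V} (hu : u ∈ B) : projRatio A u ≤ projRatioSup A B := by
  by_cases hu0 : u = 0
  · simpa [hu0, projRatio] using projRatioSup_nonneg A B
  · exact le_csSup (bddAbove_image_projRatio A _) ⟨u, ⟨hu, hu0⟩, rfl⟩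

lemma projRatio_le_projRatio_starProjection [B.HasOrthogonalProjection] {y : V} (hy : y ∈ B) :
    projRatio A y ≤ projRatio B (A.starProjection y) := by
  by_cases hu : A.starProjection y = 0
  · simp [projRatio, hu]
  set u := A.starProjection y
  have hy0 : y ≠ 0 := by rintro rfl; exact hu (map_zero _)
  have key : ‖u‖ * ‖u‖ ≤ ‖B.starProjection u‖ * ‖y‖ :=
    calc ‖u‖ * ‖u‖ = ⟪y, B.starProjection u⟫ := by
          rw [← real_inner_eq_inner_starProjection B hy, real_inner_comm, ← sq,
            real_inner_starProjection_self]
      _ ≤ ‖B.starProjection u‖ * ‖y‖ := by rw [mul_comm]; exact real_inner_le_norm _ _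
  rw [projRatio, projRatio, div_le_div_iff₀ (norm_pos_iff.mpr hy0) (norm_pos_iff.mpr hu)]
  exact key

lemma projRatioSup_le_projRatioSup_swap [B.HasOrthogonalProjection] :
    projRatioSup A B ≤ projRatioSup B A :=
  Real.sSup_le (by
      rintro _ ⟨y, ⟨hy, -⟩, rfl⟩
      exact (projRatio_le_projRatio_starProjection A B hy).trans
        (projRatio_le_projRatioSup B A (A.starProjection_apply_mem y)))
    (projRatioSup_nonneg B A)

lemma projRatioSup_comm [B.HasOrthogonalProjection] : projRatioSup A B = projRatioSup B A :=
  le_antisymm (projRatioSup_le_projRatioSup_swap A B) (projRatioSup_le_projRatioSup_swap B A)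

lemma projRatio_map (e : V ≃ₗᵢ[ℝ] W) (y : V) :
    projRatio (K.map (e.toLinearEquiv : V →ₗ[ℝ] W)) (e y) = projRatio K y := by
  rw [projRatio, starProjection_map_apply, e.symm_apply_apply, e.norm_map, e.norm_map, projRatio]

lemma projRatioSup_map [B.HasOrthogonalProjection] (e : V ≃ₗᵢ[ℝ] W) :
    projRatioSup (A.map (e.toLinearEquiv : V →ₗ[ℝ] W)) (B.map (e.toLinearEquiv : V →ₗ[ℝ] W)) =
      projRatioSup A B := by
  have hS : {w : W | w ∈ B.map (e.toLinearEquiv : V →ₗ[ℝ] W) ∧ w ≠ 0} =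
      e '' {y : V | y ∈ B ∧ y ≠ 0} := by
    ext w
    refine ⟨fun ⟨hw, hw0⟩ => ⟨e.symm w, ⟨(mem_map_equiv B).mp hw, by simpa using hw0⟩, by simp⟩,
      ?_⟩
    rintro ⟨y, ⟨hy, hy0⟩, rfl⟩
    simpa using ⟨hy, hy0⟩
  rw [projRatioSup, projRatioSup, hS, ← Set.image_comp]
  exact congrArg sSup (Set.image_congr fun y _ => projRatio_map A e y)

end Projection

theorem stmt8_general {V : Type*} [NormedAddCommGroup V] [InnerProductSpace ℝ V]
    [FiniteDimensional ℝ V]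
    (J : V →ₗ[ℝ] V) (hiso : ∀ x : V, ‖J x‖ = ‖x‖)
    (X Y : Submodule ℝ V) (hX0 : X ≠ ⊥) (hYT : Y ≠ ⊤) :
    angMM X Y = angMM ((Y.map J)ᗮ) ((X.map J)ᗮ) := by
  let e : V ≃ₗᵢ[ℝ] V := LinearIsometry.toLinearIsometryEquiv ⟨J, hiso⟩ rfl
  have hJ : (e.toLinearEquiv : V →ₗ[ℝ] V) = J := rfl
  have hJY : (Y.map J)ᗮ ≠ ⊥ := by
    rw [← hJ, ← map_orthogonal_equiv, Ne, Submodule.map_eq_bot_iff, orthogonal_eq_bot_iff]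
    exact hYT
  rw [angMM_eq_arcsin_projRatioSup X hX0, angMM_eq_arcsin_projRatioSup _ hJY,
    projRatioSup_comm Xᗮ Y, ← projRatioSup_map Y Xᗮ e]
  simp only [map_orthogonal_equiv]
  simp only [hJ, orthogonal_orthogonal]

theorem stmt8 {V : Type*} [NormedAddCommGroup V] [InnerProductSpace ℝ V]
    [FiniteDimensional ℝ V]
    (J : V →ₗ[ℝ] V) (hiso : ∀ x : V, ‖J x‖ = ‖x‖) (hsq : ∀ x : V, J (J x) = -x)
    (X Y : Submodule ℝ V) (hX0 : X ≠ ⊥) (hY0 : Y ≠ ⊥) (hXT : X ≠ ⊤) (hYT : Y ≠ ⊤) :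
    angMM X Y = angMM ((Y.map J)ᗮ) ((X.map J)ᗮ) :=
  stmt8_general J hiso X Y hX0 hYT
end

section
/- Let W ⊆ V be a two-dimensional subspace and let {e, f} be an orthonormal basis of W. Then ∠_M(W, JW) = ∠_M(JW, W) = arccos |ω(e, f)|. (In the paper's terminology this says that for a two-dimensional oriented subspace W the maximal angle between W and JW equals min{θ(W), π − θ(W)}, where θ(W) is the Kähler angle of W.) -/
/-!
Since `J` is a skew-adjoint isometry, `∠(Jx, y) = ∠(x, Jy)`, so both maximal angles reduce to
`∠_M(JW, w)` for `0 ≠ w ∈ W`. On the plane `W` the form `ω(x, y) = ⟪Jx, y⟫` is `ω(e, f)` times the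
determinant in the basis `e, f`, hence `|ω(x, w)| ≤ |ω(e, f)| ‖x‖ ‖w‖`, with equality when `x ⊥ w`.
Thus `∠_M(JW, w) = arccos |ω(e, f)|` for every such `w`.
-/

open scoped RealInnerProductSpace

section Angles

variable {V : Type*} [NormedAddCommGroup V] [InnerProductSpace ℝ V]

lemma angMv_eq_arccos_s9 {X : Submodule ℝ V} {y : V} {t : ℝ} (hy : y ≠ 0)
    (hle : ∀ x ∈ X, |⟪x, y⟫| ≤ t * (‖x‖ * ‖y‖))
    {x₀ : V} (hx₀X : x₀ ∈ X) (hx₀ : x₀ ≠ 0) (heq : |⟪x₀, y⟫| = t * (‖x₀‖ * ‖y‖)) :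
    angMv X y = Real.arccos t := by
  refine IsLeast.csInf_eq ⟨⟨x₀, ⟨hx₀X, hx₀⟩, ?_⟩, ?_⟩
  · have hpos : 0 < ‖x₀‖ * ‖y‖ := by positivity
    simp only [ang, heq, mul_div_cancel_right₀ _ hpos.ne']
  · rintro _ ⟨x, ⟨hxX, hx⟩, rfl⟩
    have hpos : 0 < ‖x‖ * ‖y‖ := by positivity
    exact Real.arccos_le_arccos ((div_le_iff₀ hpos).mpr (hle x hxX))

lemma angMM_eq_of_forall_angMv_eq {X Y : Submodule ℝ V} {v : ℝ}
    (h : ∀ y ∈ Y, y ≠ 0 → angMv X y = v) {y₀ : V} (hy₀Y : y₀ ∈ Y) (hy₀ : y₀ ≠ 0) :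
    angMM X Y = v := by
  refine IsGreatest.csSup_eq ⟨⟨y₀, ⟨hy₀Y, hy₀⟩, h y₀ hy₀Y hy₀⟩, ?_⟩
  rintro _ ⟨y, ⟨hyY, hy⟩, rfl⟩
  exact (h y hyY hy).le

end Angles

section ComplexStructure

variable {V : Type*} [NormedAddCommGroup V] [InnerProductSpace ℝ V] {J : V →ₗ[ℝ] V}

lemma inner_map_left_eq_neg_inner_map_right (hiso : ∀ x, ‖J x‖ = ‖x‖)
    (hsq : ∀ x, J (J x) = -x) (x y : V) : ⟪J x, y⟫ = -⟪x, J y⟫ := by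
  have hJ : ⟪J x, J (J y)⟫ = ⟪x, J y⟫ := (⟨J, hiso⟩ : V →ₗᵢ[ℝ] V).inner_map_map x (J y)
  rw [hsq, inner_neg_right] at hJ
  linarith

lemma inner_map_self_eq_zero_of_skew (hskew : ∀ x y, ⟪J x, y⟫ = -⟪x, J y⟫) (x : V) :
    ⟪J x, x⟫ = 0 := by
  have := hskew x x
  rw [real_inner_comm (J x) x] at this
  linarith

lemma ang_map_left (hiso : ∀ x, ‖J x‖ = ‖x‖) (hskew : ∀ x y, ⟪J x, y⟫ = -⟪x, J y⟫)
    (x y : V) : ang (J x) y = ang x (J y) := by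
  rw [ang, ang, hskew, abs_neg, hiso, hiso]

lemma angMv_map (hiso : ∀ x, ‖J x‖ = ‖x‖) (hskew : ∀ x y, ⟪J x, y⟫ = -⟪x, J y⟫)
    (X : Submodule ℝ V) (y : V) : angMv (X.map J) y = angMv X (J y) := by
  have hnz : ∀ x, J x ≠ 0 ↔ x ≠ 0 := fun x => by
    rw [ne_eq, ← norm_eq_zero, hiso, norm_eq_zero]
  have hset : {z | z ∈ X.map J ∧ z ≠ 0} = J '' {x | x ∈ X ∧ x ≠ 0} := by
    ext z
    simp only [Set.mem_ofPred_eq, Submodule.mem_map, Set.mem_image]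
    constructor
    · rintro ⟨⟨x, hxX, rfl⟩, hz⟩
      exact ⟨x, ⟨hxX, (hnz x).mp hz⟩, rfl⟩
    · rintro ⟨x, ⟨hxX, hx⟩, rfl⟩
      exact ⟨⟨x, hxX, rfl⟩, (hnz x).mpr hx⟩
  rw [angMv, angMv, hset, Set.image_image]
  simp only [ang_map_left hiso hskew]

end ComplexStructure

section Plane

variable {V : Type*} [NormedAddCommGroup V] [InnerProductSpace ℝ V] {e f : V}

lemma norm_smul_add_smul_sq (hee : ⟪e, e⟫ = (1 : ℝ)) (hff : ⟪f, f⟫ = (1 : ℝ))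
    (hef : ⟪e, f⟫ = (0 : ℝ)) (a b : ℝ) : ‖a • e + b • f‖ ^ 2 = a ^ 2 + b ^ 2 := by
  rw [← real_inner_self_eq_norm_sq]
  simp only [inner_add_left, inner_add_right, real_inner_smul_left, real_inner_smul_right,
    hee, hff, hef, real_inner_comm e f]
  ring

lemma abs_mul_sub_mul_le_norm_mul_norm (hee : ⟪e, e⟫ = (1 : ℝ)) (hff : ⟪f, f⟫ = (1 : ℝ))
    (hef : ⟪e, f⟫ = (0 : ℝ)) (a b α β : ℝ) :
    |a * β - b * α| ≤ ‖a • e + b • f‖ * ‖α • e + β • f‖ := by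
  refine abs_le_of_sq_le_sq ?_ (by positivity)
  rw [mul_pow, norm_smul_add_smul_sq hee hff hef, norm_smul_add_smul_sq hee hff hef]
  nlinarith [sq_nonneg (a * α + b * β)]

lemma inner_map_smul_add_smul {J : V →ₗ[ℝ] V} (hskew : ∀ x y, ⟪J x, y⟫ = -⟪x, J y⟫)
    (a b α β : ℝ) : ⟪J (a • e + b • f), α • e + β • f⟫ = ⟪J e, f⟫ * (a * β - b * α) := by
  have hfe : ⟪J f, e⟫ = -⟪J e, f⟫ := by rw [hskew, real_inner_comm]
  rw [map_add, map_smul, map_smul]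
  simp only [inner_add_left, inner_add_right, real_inner_smul_left, real_inner_smul_right,
    inner_map_self_eq_zero_of_skew hskew, hfe]
  ring

end Plane

lemma angMv_map_eq_arccos {V : Type*} [NormedAddCommGroup V] [InnerProductSpace ℝ V]
    {J : V →ₗ[ℝ] V} (hiso : ∀ x, ‖J x‖ = ‖x‖) (hskew : ∀ x y, ⟪J x, y⟫ = -⟪x, J y⟫)
    {e f : V} (hee : ⟪e, e⟫ = (1 : ℝ)) (hff : ⟪f, f⟫ = (1 : ℝ)) (hef : ⟪e, f⟫ = (0 : ℝ))
    {w : V} (hw : w ∈ Submodule.span ℝ {e, f}) (hw0 : w ≠ 0) :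
    angMv ((Submodule.span ℝ {e, f}).map J) w = Real.arccos |⟪J e, f⟫| := by
  obtain ⟨α, β, rfl⟩ := Submodule.mem_span_pair.mp hw
  -- the extremal `x`: `w` rotated by a right angle in the plane
  set r := β • e + (-α) • f
  have hr : ‖r‖ = ‖α • e + β • f‖ := by
    rw [← sq_eq_sq₀ (norm_nonneg _) (norm_nonneg _), norm_smul_add_smul_sq hee hff hef,
      norm_smul_add_smul_sq hee hff hef]
    ring
  have hr0 : r ≠ 0 := by rwa [← norm_ne_zero_iff, hr, norm_ne_zero_iff]
  refine angMv_eq_arccos_s9 hw0 ?_ (Submodule.mem_map_of_mem (Submodule.mem_span_pair.mpr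
    ⟨β, -α, rfl⟩)) (fun h => hr0 ?_) ?_
  · rintro _ ⟨x, hx, rfl⟩
    obtain ⟨a, b, rfl⟩ := Submodule.mem_span_pair.mp hx
    rw [inner_map_smul_add_smul hskew, abs_mul, hiso]
    exact mul_le_mul_of_nonneg_left (abs_mul_sub_mul_le_norm_mul_norm hee hff hef a b α β)
      (abs_nonneg _)
  · rwa [← norm_eq_zero, ← hiso, norm_eq_zero]
  · have hdet : β * β - -α * α = α ^ 2 + β ^ 2 := by ring
    rw [inner_map_smul_add_smul hskew, abs_mul, hiso, hr, ← sq ‖α • e + β • f‖,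
      norm_smul_add_smul_sq hee hff hef, hdet,
      abs_of_nonneg (add_nonneg (sq_nonneg α) (sq_nonneg β))]

theorem stmt9_general {V : Type*} [NormedAddCommGroup V] [InnerProductSpace ℝ V]
    (J : V →ₗ[ℝ] V) (hiso : ∀ x : V, ‖J x‖ = ‖x‖) (hsq : ∀ x : V, J (J x) = -x)
    (W : Submodule ℝ V)
    (e f : V)
    (hee : ⟪e, e⟫ = (1 : ℝ)) (hff : ⟪f, f⟫ = (1 : ℝ)) (hef : ⟪e, f⟫ = (0 : ℝ))
    (hspan : Submodule.span ℝ {e, f} = W) :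
    angMM W (W.map J) = Real.arccos |(inner ℝ (J e) f : ℝ)| ∧
    angMM (W.map J) W = Real.arccos |(inner ℝ (J e) f : ℝ)| := by
  subst hspan
  have hskew := inner_map_left_eq_neg_inner_map_right hiso hsq
  have hmain := fun w hw hw0 => angMv_map_eq_arccos hiso hskew hee hff hef (w := w) hw hw0
  have he : e ∈ Submodule.span ℝ {e, f} := Submodule.subset_span (by simp)
  have he0 : e ≠ 0 := fun h => by simp [h] at hee
  have hJe0 : J e ≠ 0 := by rwa [← norm_ne_zero_iff, hiso, norm_ne_zero_iff]
  refine ⟨angMM_eq_of_forall_angMv_eq ?_ (Submodule.mem_map_of_mem he) hJe0,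
    angMM_eq_of_forall_angMv_eq hmain he he0⟩
  rintro _ ⟨w, hw, rfl⟩ hw0
  rw [← angMv_map hiso hskew]
  exact hmain w hw (fun h => hw0 (by rw [h, map_zero]))

theorem stmt9 {V : Type*} [NormedAddCommGroup V] [InnerProductSpace ℝ V]
    [FiniteDimensional ℝ V]
    (J : V →ₗ[ℝ] V) (hiso : ∀ x : V, ‖J x‖ = ‖x‖) (hsq : ∀ x : V, J (J x) = -x)
    (W : Submodule ℝ V) (hdimW : Module.finrank ℝ W = 2)
    (e f : V) (he : e ∈ W) (hf : f ∈ W)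
    (hee : ⟪e, e⟫ = (1 : ℝ)) (hff : ⟪f, f⟫ = (1 : ℝ)) (hef : ⟪e, f⟫ = (0 : ℝ))
    (hspan : Submodule.span ℝ {e, f} = W) :
    angMM W (W.map J) = Real.arccos |(inner ℝ (J e) f : ℝ)| ∧
    angMM (W.map J) W = Real.arccos |(inner ℝ (J e) f : ℝ)| :=
  stmt9_general J hiso hsq W e f hee hff hef hspan
end

section
/- Let A : V → ℂ be a complex-linear map, let B : V → ℂ be a complex-antilinear map (additive, with B(c·x) = c̄·B(x) for all c ∈ ℂ), and suppose that the real-linear map A + B : V → ℂ is surjective and that the operator norms satisfy ‖B‖ < ‖A‖. Then the restriction of the Kähler form ω to the kernel W := ker(A + B) is a nondegenerate bilinear form; in other words, W is a symplectic subspace of (V, ω). -/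
/-!
Represent `A y = ⟪a, y⟫` and `B y = ⟪y, b⟫` (Mathlib's inner product, conjugate-linear on the
left) by Riesz, so that `‖a‖ = ‖A‖` and `‖b‖ = ‖B‖`. As a real subspace, `W` is the common real
orthogonal complement of `a + b` and `i (a - b)`, while `ω(x, y) = Re ⟪i x, y⟫`. Hence if
`ω(x, ·)` vanishes on `W`, then `i x` lies in the real span of `a + b` and `i (a - b)`, i.e.
`x = w a - w̄ b` for some `w ∈ ℂ`; and for such `x`, `(A + B) x = w (‖a‖² - ‖b‖²)`, which is
nonzero unless `w = 0`.
-/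

open ComplexConjugate

theorem exists_smul_add_smul_eq_of_forall_inner_eq_zero {E : Type*}
    [NormedAddCommGroup E] [InnerProductSpace ℝ E] {u v z : E}
    (h : ∀ y, inner ℝ u y = 0 → inner ℝ v y = 0 → inner ℝ z y = 0) :
    ∃ s t : ℝ, s • u + t • v = z := by
  have : FiniteDimensional ℝ (Submodule.span ℝ {u, v}) :=
    FiniteDimensional.span_of_finite ℝ (Set.toFinite _)
  rw [← Submodule.mem_span_pair, ← Submodule.orthogonal_orthogonal (Submodule.span ℝ {u, v}),
    Submodule.mem_orthogonal']
  intro y hy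
  rw [Submodule.mem_orthogonal] at hy
  exact h y (real_inner_comm u y ▸ hy u (Submodule.subset_span (by simp)))
    (real_inner_comm v y ▸ hy v (Submodule.subset_span (by simp)))

section

variable {V : Type*} [NormedAddCommGroup V] [InnerProductSpace ℂ V]

theorem exists_norm_eq_and_inner_eq_of_map_smul [CompleteSpace V] (f : V →L[ℝ] ℂ)
    (hf : ∀ (c : ℂ) (x : V), f (c • x) = c * f x) :
    ∃ a : V, ‖a‖ = ‖f‖ ∧ ∀ y, f y = inner ℂ a y := by
  let g : V →L[ℂ] ℂ := ⟨⟨⟨f, map_add f⟩, hf⟩, f.continuous⟩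
  refine ⟨(InnerProductSpace.toDual ℂ V).symm g, ?_, fun y => ?_⟩
  · rw [LinearIsometryEquiv.norm_map, ← g.norm_restrictScalars (𝕜' := ℝ)]
    rfl
  · rw [InnerProductSpace.toDual_symm_apply]
    rfl

theorem exists_norm_eq_and_inner_eq_of_map_smul_conj [CompleteSpace V] (f : V →L[ℝ] ℂ)
    (hf : ∀ (c : ℂ) (x : V), f (c • x) = conj c * f x) :
    ∃ b : V, ‖b‖ = ‖f‖ ∧ ∀ y, f y = inner ℂ y b := by
  obtain ⟨b, hb, hfb⟩ := exists_norm_eq_and_inner_eq_of_map_smul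
    (Complex.conjLIE.toLinearIsometry.toContinuousLinearMap.comp f) (by simp [hf])
  refine ⟨b, hb.trans (LinearIsometry.norm_toContinuousLinearMap_comp _), fun y => ?_⟩
  rw [← inner_conj_symm, ← hfb]
  simp

theorem im_inner_eq_re_inner_I_smul (x y : V) :
    (inner ℂ x y).im = (inner ℂ (Complex.I • x) y).re := by
  simp

theorem inner_add_inner_eq_zero_iff (a b y : V) :
    inner ℂ a y + inner ℂ y b = 0 ↔
      (inner ℂ (a + b) y).re = 0 ∧ (inner ℂ (Complex.I • (a - b)) y).re = 0 := by
  rw [← im_inner_eq_re_inner_I_smul, Complex.ext_iff, ← inner_conj_symm y b]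
  simp only [inner_add_left, inner_sub_left, Complex.add_re, Complex.add_im, Complex.sub_im,
    Complex.conj_re, Complex.conj_im, Complex.zero_re, Complex.zero_im]
  constructor <;> rintro ⟨h1, h2⟩ <;> constructor <;> linarith

theorem exists_eq_smul_sub_conj_smul {a b x : V}
    (h : ∀ y, inner ℂ a y + inner ℂ y b = 0 → (inner ℂ x y).im = 0) :
    ∃ w : ℂ, x = w • a - conj w • b := by
  let _ : InnerProductSpace ℝ V := InnerProductSpace.complexToReal
  obtain ⟨s, t, hst⟩ := exists_smul_add_smul_eq_of_forall_inner_eq_zero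
    (u := a + b) (v := Complex.I • (a - b)) (z := Complex.I • x) fun y h1 h2 =>
      (im_inner_eq_re_inner_I_smul x y).symm.trans
        (h y ((inner_add_inner_eq_zero_iff a b y).2 ⟨h1, h2⟩))
  refine ⟨t - s * Complex.I, ?_⟩
  have hx : x = -Complex.I • (Complex.I • x) := by simp [smul_smul]
  rw [hx, ← hst, ← Complex.coe_smul, ← Complex.coe_smul]
  simp only [map_sub, map_mul, Complex.conj_ofReal, Complex.conj_I]
  match_scalars <;> ring_nf <;> simp only [Complex.I_sq] <;> ring

theorem inner_add_inner_smul_sub_conj_smul (a b : V) (w : ℂ) :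
    inner ℂ a (w • a - conj w • b) + inner ℂ (w • a - conj w • b) b =
      w * (‖a‖ ^ 2 - ‖b‖ ^ 2 : ℝ) := by
  simp only [inner_sub_left, inner_sub_right, inner_smul_left, inner_smul_right,
    inner_self_eq_norm_sq_to_K, Complex.conj_conj, RCLike.ofReal_eq_complex_ofReal]
  push_cast
  ring

end

theorem stmt10_general {V : Type*} [NormedAddCommGroup V] [InnerProductSpace ℂ V]
    [FiniteDimensional ℂ V]
    (A B : V →L[ℝ] ℂ)
    (hA : ∀ (c : ℂ) (x : V), A (c • x) = c * A x)
    (hB : ∀ (c : ℂ) (x : V), B (c • x) = (starRingEnd ℂ) c * B x)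
    (hnorm : ‖B‖ < ‖A‖) :
    ∀ x : V, A x + B x = 0 → x ≠ 0 →
      ∃ y : V, (A y + B y = 0) ∧ (inner ℂ x y : ℂ).im ≠ 0 := by
  intro x hx hx0
  by_contra! hω
  obtain ⟨a, ha, hAa⟩ := exists_norm_eq_and_inner_eq_of_map_smul A hA
  obtain ⟨b, hb, hBb⟩ := exists_norm_eq_and_inner_eq_of_map_smul_conj B hB
  simp only [hAa, hBb] at hx hω
  obtain ⟨w, rfl⟩ := exists_eq_smul_sub_conj_smul hω
  have hab : (‖a‖ ^ 2 - ‖b‖ ^ 2 : ℝ) ≠ 0 := by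
    nlinarith [norm_nonneg b]
  rw [inner_add_inner_smul_sub_conj_smul, mul_eq_zero, Complex.ofReal_eq_zero] at hx
  obtain rfl := hx.resolve_right hab
  simp at hx0

theorem stmt10 {V : Type*} [NormedAddCommGroup V] [InnerProductSpace ℂ V]
    [FiniteDimensional ℂ V]
    (A B : V →L[ℝ] ℂ)
    (hA : ∀ (c : ℂ) (x : V), A (c • x) = c * A x)
    (hB : ∀ (c : ℂ) (x : V), B (c • x) = (starRingEnd ℂ) c * B x)
    (hsurj : Function.Surjective fun x : V => A x + B x)
    (hnorm : ‖B‖ < ‖A‖) :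
    ∀ x : V, A x + B x = 0 → x ≠ 0 →
      ∃ y : V, (A y + B y = 0) ∧ (inner ℂ x y : ℂ).im ≠ 0 :=
  stmt10_general A B hA hB hnorm
end

section
/- Let σ be an alternating bilinear form on V that tames J and suppose γ(σ) = 1, i.e. α(σ) = β(σ). Then σ = c·ω for the positive constant c = α(σ). -/
/-!
For a unit vector `u`, the bound `σ x y ≤ β ‖x‖ ‖y‖` (which holds because `√(‖x‖²‖y‖² - ⟪x, y⟫²)`
is at most `‖x‖ ‖y‖`) and the definition of `α` give `α ≤ σ u (J u) ≤ β = α`. Hence the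
functional `σ u` is bounded by `α ‖·‖` and attains this bound at the unit vector `J u`; the
equality case of Cauchy–Schwarz for its Riesz representative forces `σ u = α ⟪J u, ·⟫`, and
bilinearity extends this from unit vectors to all of `V`.
-/

/-- `α(σ) = inf{σ(x,Jx) : ‖x‖ = 1}` for a bilinear form `σ` and `J : V → V`. -/
noncomputable def alphaT {V : Type*} [NormedAddCommGroup V] [InnerProductSpace ℝ V]
    (J : V → V) (σ : V →ₗ[ℝ] V →ₗ[ℝ] ℝ) : ℝ :=
  sInf {r : ℝ | ∃ x : V, ‖x‖ = 1 ∧ r = σ x (J x)}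

/-- `β(σ) = sup{σ(x,y)/√(‖x‖²‖y‖² − ⟨x,y⟩²) : x, y linearly independent}`. -/
noncomputable def betaT {V : Type*} [NormedAddCommGroup V] [InnerProductSpace ℝ V]
    (σ : V →ₗ[ℝ] V →ₗ[ℝ] ℝ) : ℝ :=
  sSup {r : ℝ | ∃ x y : V, LinearIndependent ℝ ![x, y] ∧
    r = σ x y / Real.sqrt (‖x‖ ^ 2 * ‖y‖ ^ 2 - (inner ℝ x y : ℝ) ^ 2)}

/-- `γ(σ) = α(σ)/β(σ)`. -/
noncomputable def gammaT {V : Type*} [NormedAddCommGroup V] [InnerProductSpace ℝ V]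
    (J : V → V) (σ : V →ₗ[ℝ] V →ₗ[ℝ] ℝ) : ℝ :=
  alphaT J σ / betaT σ

open scoped RealInnerProductSpace

section InnerProductSpace

variable {E : Type*} [NormedAddCommGroup E] [InnerProductSpace ℝ E]

theorem LinearMap.eq_mul_inner_of_le_mul_norm [CompleteSpace E] (f : E →ₗ[ℝ] ℝ) {c : ℝ}
    (hf : ∀ y, f y ≤ c * ‖y‖) {e : E} (he : ‖e‖ = 1) (hfe : f e = c) (y : E) :
    f y = c * ⟪e, y⟫ := by
  have hf' : ∀ y, ‖f y‖ ≤ c * ‖y‖ := fun y ↦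
    abs_le.mpr ⟨by simpa [neg_le] using hf (-y), hf y⟩
  set w := (InnerProductSpace.toDual ℝ E).symm (f.mkContinuous c hf')
  have hw : ∀ y, ⟪w, y⟫ = f y := fun y ↦ InnerProductSpace.toDual_symm_apply
  have hww : ‖w‖ ^ 2 ≤ c * ‖w‖ := by
    rw [← real_inner_self_eq_norm_sq, hw]; exact hf w
  have hwe : w = c • e := by
    have : ‖w - c • e‖ ^ 2 ≤ 0 := by
      rw [norm_sub_sq_real, real_inner_smul_right, hw, hfe, norm_smul, he, Real.norm_eq_abs,
        mul_one, sq_abs]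
      -- the left side is `-(c - ‖w‖) ^ 2 - 2 * (c * ‖w‖ - ‖w‖ ^ 2)`
      nlinarith [sq_nonneg (c - ‖w‖)]
    exact sub_eq_zero.mp (norm_eq_zero.mp (by nlinarith [norm_nonneg (w - c • e)]))
  rw [← hw, hwe, real_inner_smul_left]

theorem LinearMap.ext_of_norm_eq_one {M : Type*} [AddCommGroup M] [Module ℝ M]
    {f g : E →ₗ[ℝ] M} (h : ∀ u, ‖u‖ = 1 → f u = g u) : f = g := by
  ext x
  rcases eq_or_ne x 0 with rfl | hx
  · simp
  · have := h _ (norm_smul_inv_norm (𝕜 := ℝ) hx)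
    rw [map_smul, map_smul] at this
    exact smul_right_injective M (inv_ne_zero (norm_ne_zero_iff.mpr hx)) this

theorem norm_sq_inner_smul_sub_norm_sq_smul (x y : E) :
    ‖⟪x, y⟫ • x - ‖x‖ ^ 2 • y‖ ^ 2 = ‖x‖ ^ 2 * (‖x‖ ^ 2 * ‖y‖ ^ 2 - ⟪x, y⟫ ^ 2) := by
  simp only [norm_sub_sq_real, norm_smul, real_inner_smul_left, real_inner_smul_right, mul_pow,
    Real.norm_eq_abs, sq_abs, abs_pow]
  ring

theorem sq_inner_lt_of_linearIndependent {x y : E} (h : LinearIndependent ℝ ![x, y]) :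
    ⟪x, y⟫ ^ 2 < ‖x‖ ^ 2 * ‖y‖ ^ 2 := by
  have hx : x ≠ 0 := by simpa using h.ne_zero 0
  have hw : ⟪x, y⟫ • x - ‖x‖ ^ 2 • y ≠ 0 := fun h0 ↦ by
    have := (LinearIndependent.pair_iff.mp h ⟪x, y⟫ (-‖x‖ ^ 2)
      (by rw [neg_smul, ← sub_eq_add_neg, h0])).2
    exact hx (norm_eq_zero.mp (pow_eq_zero_iff two_ne_zero |>.mp (neg_eq_zero.mp this)))
  have h2 := norm_sq_inner_smul_sub_norm_sq_smul x y
  have : 0 < ‖x‖ ^ 2 * (‖x‖ ^ 2 * ‖y‖ ^ 2 - ⟪x, y⟫ ^ 2) := h2 ▸ by positivity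
  linarith [pos_of_mul_pos_right this (by positivity)]

end InnerProductSpace

section Alternating

variable {V : Type*} [NormedAddCommGroup V] [InnerProductSpace ℝ V] {σ : V →ₗ[ℝ] V →ₗ[ℝ] ℝ}

theorem LinearMap.IsAlt.apply_eq_zero_of_not_linearIndependent (halt : σ.IsAlt) {x y : V}
    (h : ¬ LinearIndependent ℝ ![x, y]) : σ x y = 0 := by
  rw [LinearIndependent.pair_iff] at h
  push Not at h
  obtain ⟨s, t, hst, hne⟩ := h
  have hs : s * σ x y = 0 := by
    simpa [halt y] using congr(σ $(eq_neg_of_add_eq_zero_left hst) y)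
  have ht : t * σ x y = 0 := by
    simpa [halt x] using congr(σ x $(eq_neg_of_add_eq_zero_right hst))
  by_cases hs0 : s = 0
  · exact (mul_eq_zero.mp ht).resolve_left (hne hs0)
  · exact (mul_eq_zero.mp hs).resolve_left hs0

theorem LinearMap.IsAlt.abs_apply_le_mul_sqrt (halt : σ.IsAlt) {C : ℝ}
    (hC : ∀ x y, |σ x y| ≤ C * ‖x‖ * ‖y‖) (x y : V) :
    |σ x y| ≤ C * √(‖x‖ ^ 2 * ‖y‖ ^ 2 - ⟪x, y⟫ ^ 2) := by
  rcases eq_or_ne x 0 with rfl | hx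
  · simp
  -- `w` is `-‖x‖ ^ 2` times the component of `y` orthogonal to `x`.
  set w := ⟪x, y⟫ • x - ‖x‖ ^ 2 • y
  have hσw : σ x w = -(‖x‖ ^ 2 * σ x y) := by simp [w, halt x]
  have hw : ‖w‖ = ‖x‖ * √(‖x‖ ^ 2 * ‖y‖ ^ 2 - ⟪x, y⟫ ^ 2) := by
    rw [← Real.sqrt_sq (norm_nonneg w), norm_sq_inner_smul_sub_norm_sq_smul,
      Real.sqrt_mul (sq_nonneg _), Real.sqrt_sq (norm_nonneg x)]
  have h := hC x w
  rw [hσw, abs_neg, abs_mul, abs_of_nonneg (sq_nonneg _), hw] at h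
  refine le_of_mul_le_mul_left ?_ (pow_pos (norm_pos_iff.mpr hx) 2)
  linarith

theorem LinearMap.IsAlt.bddAbove_betaT_set [FiniteDimensional ℝ V] (halt : σ.IsAlt) :
    BddAbove {r : ℝ | ∃ x y : V, LinearIndependent ℝ ![x, y] ∧
      r = σ x y / Real.sqrt (‖x‖ ^ 2 * ‖y‖ ^ 2 - (inner ℝ x y : ℝ) ^ 2)} := by
  set T := σ.toContinuousBilinearMap
  refine ⟨‖T‖, ?_⟩
  rintro _ ⟨x, y, -, rfl⟩
  exact div_le_of_le_mul₀ (Real.sqrt_nonneg _) (norm_nonneg T) <|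
    (le_abs_self _).trans (halt.abs_apply_le_mul_sqrt (fun x y ↦ T.le_opNorm₂ x y) x y)

theorem LinearMap.IsAlt.apply_le_betaT_mul [FiniteDimensional ℝ V] (halt : σ.IsAlt)
    (hβ : 0 ≤ betaT σ) (x y : V) : σ x y ≤ betaT σ * (‖x‖ * ‖y‖) := by
  by_cases h : LinearIndependent ℝ ![x, y]
  · have hG : 0 < √(‖x‖ ^ 2 * ‖y‖ ^ 2 - ⟪x, y⟫ ^ 2) :=
      Real.sqrt_pos.mpr (sub_pos.mpr (sq_inner_lt_of_linearIndependent h))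
    calc σ x y ≤ betaT σ * √(‖x‖ ^ 2 * ‖y‖ ^ 2 - ⟪x, y⟫ ^ 2) :=
          (div_le_iff₀ hG).mp (le_csSup halt.bddAbove_betaT_set ⟨x, y, h, rfl⟩)
      _ ≤ betaT σ * (‖x‖ * ‖y‖) := by
          gcongr
          exact Real.sqrt_le_iff.mpr ⟨by positivity, by nlinarith [sq_nonneg ⟪x, y⟫]⟩
  · rw [halt.apply_eq_zero_of_not_linearIndependent h]
    positivity

end Alternating

section Taming

variable {V : Type*} [NormedAddCommGroup V] [InnerProductSpace ℝ V] {J : V → V}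
  {σ : V →ₗ[ℝ] V →ₗ[ℝ] ℝ}

theorem zero_mem_lowerBounds_alphaT_set (htame : ∀ x : V, x ≠ 0 → 0 < σ x (J x)) :
    0 ∈ lowerBounds {r : ℝ | ∃ x : V, ‖x‖ = 1 ∧ r = σ x (J x)} := by
  rintro _ ⟨x, hx, rfl⟩
  exact (htame x (norm_ne_zero_iff.mp (hx ▸ one_ne_zero))).le

theorem alphaT_nonneg (htame : ∀ x : V, x ≠ 0 → 0 < σ x (J x)) : 0 ≤ alphaT J σ :=
  Real.sInf_nonneg (zero_mem_lowerBounds_alphaT_set htame)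

theorem alphaT_le (htame : ∀ x : V, x ≠ 0 → 0 < σ x (J x)) {u : V} (hu : ‖u‖ = 1) :
    alphaT J σ ≤ σ u (J u) :=
  csInf_le ⟨0, zero_mem_lowerBounds_alphaT_set htame⟩ ⟨u, hu, rfl⟩

end Taming

theorem stmt13_general {V : Type*} [NormedAddCommGroup V] [InnerProductSpace ℝ V]
    [FiniteDimensional ℝ V] (hdim : 2 ≤ Module.finrank ℝ V)
    (J : V →ₗ[ℝ] V) (hiso : ∀ x : V, ‖J x‖ = ‖x‖)
    (σ : V →ₗ[ℝ] V →ₗ[ℝ] ℝ) (halt : ∀ x : V, σ x x = 0)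
    (htame : ∀ x : V, x ≠ 0 → 0 < σ x (J x))
    (hab : alphaT (⇑J) σ = betaT σ) :
    0 < alphaT (⇑J) σ ∧ ∀ x y : V, σ x y = alphaT (⇑J) σ * (inner ℝ (J x) y : ℝ) := by
  have hbound : ∀ x y, σ x y ≤ alphaT J σ * (‖x‖ * ‖y‖) :=
    hab ▸ LinearMap.IsAlt.apply_le_betaT_mul halt (hab ▸ alphaT_nonneg htame)
  have hdiag : ∀ u : V, ‖u‖ = 1 → σ u (J u) = alphaT J σ := fun u hu ↦
    le_antisymm (by simpa [hiso, hu] using hbound u (J u)) (alphaT_le htame hu)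
  have hunit : ∀ u : V, ‖u‖ = 1 → ∀ y, σ u y = alphaT J σ * ⟪J u, y⟫ := fun u hu ↦
    (σ u).eq_mul_inner_of_le_mul_norm (by simpa [hu] using hbound u) (by rw [hiso, hu])
      (hdiag u hu)
  have : Nontrivial V := Module.nontrivial_of_finrank_pos (R := ℝ) (by omega)
  obtain ⟨u₀, hu₀⟩ := exists_norm_eq V zero_le_one
  refine ⟨hdiag u₀ hu₀ ▸ htame u₀ (norm_ne_zero_iff.mp (hu₀ ▸ one_ne_zero)), fun x y ↦ ?_⟩
  have hσ : σ = alphaT J σ • (innerₗ V).comp J :=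
    LinearMap.ext_of_norm_eq_one fun u hu ↦ LinearMap.ext fun y ↦ by simpa using hunit u hu y
  simpa using LinearMap.congr_fun₂ hσ x y

theorem stmt13 {V : Type*} [NormedAddCommGroup V] [InnerProductSpace ℝ V]
    [FiniteDimensional ℝ V] (hdim : 2 ≤ Module.finrank ℝ V)
    (J : V →ₗ[ℝ] V) (hiso : ∀ x : V, ‖J x‖ = ‖x‖) (hsq : ∀ x : V, J (J x) = -x)
    (σ : V →ₗ[ℝ] V →ₗ[ℝ] ℝ) (halt : ∀ x : V, σ x x = 0)
    (htame : ∀ x : V, x ≠ 0 → 0 < σ x (J x))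
    (hab : alphaT (⇑J) σ = betaT σ) :
    0 < alphaT (⇑J) σ ∧ ∀ x y : V, σ x y = alphaT (⇑J) σ * (inner ℝ (J x) y : ℝ) :=
  stmt13_general hdim J hiso σ halt htame hab
end

section
/- Let V and V′ be finite-dimensional real inner product spaces, let T : V → V′ be a nonzero linear map, and let W ⊆ V be a subspace such that T restricted to W is surjective onto V′. Set ν := inf{‖Tw‖ : w ∈ W, w ⊥ (W ∩ ker T), ‖w‖ = 1} (the reciprocal of the minimal norm of a right inverse of T|_W). Then for every unit vector v ∈ ker T with v ⊥ (W ∩ ker T) and every unit vector w ∈ W with w ⊥ (W ∩ ker T), one has arccos |⟨v, w⟩| ≥ ν / ‖T‖, where ‖T‖ is the operator norm; in other words, the minimal angle between W and ker T is at least ν(T|_W)/‖T‖. -/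
/-!
Since `v ∈ ker T`, we have `T w = T (w - ⟪v, w⟫ • v)`, and for unit vectors `v`, `w` the
vector `w - ⟪v, w⟫ • v` has norm `√(1 - ⟪v, w⟫²) = sin θ` with `θ = arccos |⟪v, w⟫|`.
Hence `ν ≤ ‖T w‖ ≤ ‖T‖ sin θ ≤ ‖T‖ θ`.
-/

open Real RealInnerProductSpace

section

variable {E F : Type*} [SeminormedAddCommGroup E] [InnerProductSpace ℝ E]
  [SeminormedAddCommGroup F] [InnerProductSpace ℝ F]

theorem norm_sub_inner_smul_sq {v : E} (hv : ‖v‖ = 1) (w : E) :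
    ‖w - ⟪v, w⟫ • v‖ ^ 2 = ‖w‖ ^ 2 - ⟪v, w⟫ ^ 2 := by
  rw [norm_sub_sq_real, inner_smul_right, real_inner_comm, norm_smul, hv, mul_one,
    Real.norm_eq_abs, sq_abs]
  ring

theorem norm_apply_le_opNorm_mul_arccos {T : E →L[ℝ] F} {v w : E} (hTv : T v = 0)
    (hv : ‖v‖ = 1) (hw : ‖w‖ = 1) : ‖T w‖ ≤ ‖T‖ * arccos |⟪v, w⟫| :=
  calc ‖T w‖ = ‖T (w - ⟪v, w⟫ • v)‖ := by rw [map_sub, map_smul, hTv, smul_zero, sub_zero]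
    _ ≤ ‖T‖ * ‖w - ⟪v, w⟫ • v‖ := T.le_opNorm _
    _ = ‖T‖ * sin (arccos |⟪v, w⟫|) := by
      rw [sin_arccos, sq_abs, ← one_pow 2, ← hw, ← norm_sub_inner_smul_sq hv,
        sqrt_sq (norm_nonneg _)]
    _ ≤ ‖T‖ * arccos |⟪v, w⟫| := by gcongr; exact sin_le (arccos_nonneg _)

end

theorem stmt17_general {V V' : Type*}
    [NormedAddCommGroup V] [InnerProductSpace ℝ V]
    [NormedAddCommGroup V'] [InnerProductSpace ℝ V']
    (T : V →L[ℝ] V') (W : Submodule ℝ V) :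
    ∀ v w : V, v ∈ LinearMap.ker (T : V →ₗ[ℝ] V') → w ∈ W → ‖v‖ = 1 → ‖w‖ = 1 →
      v ∈ (W ⊓ LinearMap.ker (T : V →ₗ[ℝ] V'))ᗮ → w ∈ (W ⊓ LinearMap.ker (T : V →ₗ[ℝ] V'))ᗮ →
      sInf {r : ℝ | ∃ u : V, u ∈ W ∧ u ∈ (W ⊓ LinearMap.ker (T : V →ₗ[ℝ] V'))ᗮ ∧ ‖u‖ = 1 ∧ r = ‖T u‖}
          / ‖T‖
        ≤ Real.arccos |(inner ℝ v w : ℝ)| := by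
  intro v w hv hw hnv hnw _ hwperp
  apply div_le_of_le_mul₀ (norm_nonneg _) (arccos_nonneg _)
  calc _ ≤ ‖T w‖ :=
        csInf_le ⟨0, by rintro r ⟨u, -, -, -, rfl⟩; exact norm_nonneg _⟩
          (by exact ⟨w, hw, hwperp, hnw, rfl⟩)
    _ ≤ ‖T‖ * arccos |⟪v, w⟫| := norm_apply_le_opNorm_mul_arccos hv hnv hnw
    _ = _ := mul_comm _ _

theorem stmt17 {V V' : Type*}
    [NormedAddCommGroup V] [InnerProductSpace ℝ V] [FiniteDimensional ℝ V]
    [NormedAddCommGroup V'] [InnerProductSpace ℝ V'] [FiniteDimensional ℝ V']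
    (T : V →L[ℝ] V') (hT : T ≠ 0) (W : Submodule ℝ V)
    (hsurj : ∀ y : V', ∃ x ∈ W, T x = y) :
    ∀ v w : V, v ∈ LinearMap.ker (T : V →ₗ[ℝ] V') → w ∈ W → ‖v‖ = 1 → ‖w‖ = 1 →
      v ∈ (W ⊓ LinearMap.ker (T : V →ₗ[ℝ] V'))ᗮ → w ∈ (W ⊓ LinearMap.ker (T : V →ₗ[ℝ] V'))ᗮ →
      sInf {r : ℝ | ∃ u : V, u ∈ W ∧ u ∈ (W ⊓ LinearMap.ker (T : V →ₗ[ℝ] V'))ᗮ ∧ ‖u‖ = 1 ∧ r = ‖T u‖}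
          / ‖T‖
        ≤ Real.arccos |(inner ℝ v w : ℝ)| :=
  stmt17_general T W
end

section
/- Let V be a finite-dimensional real normed vector space, let C be an open subset of the dual space V* such that t·φ ∈ C whenever φ ∈ C and t > 0, let ω ∈ C, and let E be a real number. Then the set S := {A ∈ V : φ(A) ≥ 0 for every φ ∈ C, and ω(A) ≤ E} is bounded. Moreover, if Λ ⊆ V is an additive subgroup which is discrete in V, then S ∩ Λ is a finite set. -/
/-! If a closed ball of radius `ε` around `ω` consists of functionals that are nonnegative at
`A`, testing against `ω - ε • g` for a norming functional `g` of `A` gives `ε ‖A‖ ≤ ω A`.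
Hence the set is contained in the ball of radius `E / ε`; a discrete subgroup is closed, and
in a proper space it meets every bounded set in a finite set. -/

open Metric

section

variable {V : Type*} [NormedAddCommGroup V] [NormedSpace ℝ V]

theorem mul_norm_le_of_forall_mem_closedBall_nonneg {ω : StrongDual ℝ V} {ε : ℝ} (hε : 0 ≤ ε)
    {x : V} (h : ∀ φ ∈ closedBall ω ε, 0 ≤ φ x) : ε * ‖x‖ ≤ ω x := by
  obtain ⟨g, hg, hgx⟩ := exists_dual_vector'' ℝ x
  have hmem : ω - ε • g ∈ closedBall ω ε := by
    rw [mem_closedBall, dist_eq_norm, sub_sub_cancel_left, norm_neg, norm_smul,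
      Real.norm_of_nonneg hε]
    exact mul_le_of_le_one_right hε hg
  simpa only [sub_apply, smul_apply, hgx, Real.ringHom_apply, smul_eq_mul, sub_nonneg]
    using h _ hmem

theorem isBounded_setOf_forall_nonneg_of_mem_interior {C : Set (StrongDual ℝ V)}
    {ω : StrongDual ℝ V} (hω : ω ∈ interior C) (c : ℝ) :
    Bornology.IsBounded {x : V | (∀ φ ∈ C, 0 ≤ φ x) ∧ ω x ≤ c} := by
  obtain ⟨ε, hε, hball⟩ := nhds_basis_closedBall.mem_iff.mp (mem_interior_iff_mem_nhds.mp hω)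
  refine (isBounded_closedBall (x := 0) (r := c / ε)).subset fun x ⟨hx, hxc⟩ => ?_
  have hnorm := mul_norm_le_of_forall_mem_closedBall_nonneg hε.le fun φ hφ => hx φ (hball hφ)
  rw [mem_closedBall_zero_iff, le_div_iff₀ hε]
  linarith

end

theorem stmt19_general {V : Type*} [NormedAddCommGroup V] [NormedSpace ℝ V]
    [FiniteDimensional ℝ V]
    (C : Set (V →L[ℝ] ℝ)) (hopen : IsOpen C)
    (ω : V →L[ℝ] ℝ) (hω : ω ∈ C) (E : ℝ) :
    Bornology.IsBounded {A : V | (∀ φ ∈ C, 0 ≤ φ A) ∧ ω A ≤ E} ∧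
    ∀ Λ : AddSubgroup V, DiscreteTopology Λ →
      ({A : V | (∀ φ ∈ C, 0 ≤ φ A) ∧ ω A ≤ E} ∩ (Λ : Set V)).Finite := by
  have hbdd := isBounded_setOf_forall_nonneg_of_mem_interior (hopen.interior_eq ▸ hω) E
  exact ⟨hbdd, fun Λ hΛ => finite_isBounded_inter_isClosed
    (isDiscrete_iff_discreteTopology.mpr hΛ) hbdd AddSubgroup.isClosed_of_discrete⟩

theorem stmt19 {V : Type*} [NormedAddCommGroup V] [NormedSpace ℝ V]
    [FiniteDimensional ℝ V]
    (C : Set (V →L[ℝ] ℝ)) (hopen : IsOpen C)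
    (hcone : ∀ φ ∈ C, ∀ t : ℝ, 0 < t → t • φ ∈ C)
    (ω : V →L[ℝ] ℝ) (hω : ω ∈ C) (E : ℝ) :
    Bornology.IsBounded {A : V | (∀ φ ∈ C, 0 ≤ φ A) ∧ ω A ≤ E} ∧
    ∀ Λ : AddSubgroup V, DiscreteTopology Λ →
      ({A : V | (∀ φ ∈ C, 0 ≤ φ A) ∧ ω A ≤ E} ∩ (Λ : Set V)).Finite :=
  stmt19_general C hopen ω hω E
end
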